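/- arXiv:2002.12157 — 9 statements merged into one kernel-verified Lean document; each statement's English description precedes it below -/
import Mathlib

section
/- Classical analogue of the two-node no-go: let A^in, A^out, B^in, B^out be finite variables, and let P(A^in|B^out) and P(B^in|A^out) be classical channels (conditional probability distributions). If the map κ(A^in, A^out, B^in, B^out) = P(A^in|B^out)·P(B^in|A^out) is a classical process over the split nodes A and B, then P(A^in|B^out) is independent of B^out or P(B^in|A^out) is independent of A^out; i.e., at least one of the two channels is non-signalling. -/
open BigOperators

/-- `P` is a classical channel (conditional probability distribution) from `X` to `Y`. -/
def IsClassicalChannel {X Y : Type} [Fintype Y] (P : X → Y → ℝ) : Prop :=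
  (∀ x y, 0 ≤ P x y) ∧ ∀ x, ∑ y, P x y = 1

/-- `κ` is a classical process over the two split nodes `A = (Ai, Ao)` and `B = (Bi, Bo)`:
it takes values in `[0,1]` and yields total probability one for every choice of classical
channels `P(A^out|A^in)` and `P(B^out|B^in)` at the two nodes. -/
def IsClassicalProcess2 {Ai Ao Bi Bo : Type} [Fintype Ai] [Fintype Ao] [Fintype Bi] [Fintype Bo]
    (κ : Ai → Ao → Bi → Bo → ℝ) : Prop :=
  (∀ ai ao bi bo, 0 ≤ κ ai ao bi bo ∧ κ ai ao bi bo ≤ 1) ∧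
    ∀ (QA : Ai → Ao → ℝ) (QB : Bi → Bo → ℝ),
      IsClassicalChannel QA → IsClassicalChannel QB →
      ∑ ai, ∑ ao, ∑ bi, ∑ bo, κ ai ao bi bo * QA ai ao * QB bi bo = 1

/-- **Classical analogue of the two-node no-go.**
If `P(A^in|B^out)` and `P(B^in|A^out)` are classical channels whose product
`κ(A^in,A^out,B^in,B^out) = P(A^in|B^out)·P(B^in|A^out)` is a classical process over the
split nodes `A` and `B`, then `P(A^in|B^out)` is independent of `B^out` or
`P(B^in|A^out)` is independent of `A^out`; i.e. at least one channel is non-signalling. -/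
theorem classical_two_node_no_go
    {Ai Ao Bi Bo : Type} [Fintype Ai] [Fintype Ao] [Fintype Bi] [Fintype Bo]
    (PA : Bo → Ai → ℝ) (PB : Ao → Bi → ℝ)
    (hPA : IsClassicalChannel PA) (hPB : IsClassicalChannel PB)
    (hproc : IsClassicalProcess2 (fun ai ao bi bo => PA bo ai * PB ao bi)) :
    (∀ b b' a, PA b a = PA b' a) ∨ (∀ a a' b, PB a b = PB a' b) := by
  classical
  by_cases h : ∀ b b' a, PA b a = PA b' a
  · exact Or.inl h
  right
  push_neg at h
  obtain ⟨b1, b2, astar, hne⟩ := h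
  intro a1 a2 bstar
  -- For any deterministic choice of channels, the normalization gives:
  have key : ∀ (f : Ai → Ao) (g : Bi → Bo),
      ∑ ai, ∑ bi, PA (g bi) ai * PB (f ai) bi = 1 := by
    intro f g
    have hQA : IsClassicalChannel (fun ai ao => if ao = f ai then (1:ℝ) else 0) := by
      constructor
      · intro x y; positivity
      · intro x; simp
    have hQB : IsClassicalChannel (fun bi bo => if bo = g bi then (1:ℝ) else 0) := by
      constructor
      · intro x y; positivity
      · intro x; simp
    have := hproc.2 _ _ hQA hQB
    simp only [mul_ite, mul_one, mul_zero, ite_mul, zero_mul,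
      Finset.sum_ite_eq', Finset.mem_univ, if_true] at this
    convert this using 2 with ai
    rw [Finset.sum_comm]
    refine Finset.sum_congr rfl fun bi _ => ?_
    simp [Finset.sum_ite_eq']
  -- Four deterministic choices
  set fD : Ai → Ao := fun ai => if ai = astar then a1 else a2 with hfD
  set gG : Bi → Bo := fun bi => if bi = bstar then b1 else b2 with hgG
  have e1 := key fD gG
  have e2 := key fD (fun _ => b2)
  have e3 := key (fun _ => a2) gG
  have e4 := key (fun _ => a2) (fun _ => b2)
  have comb : ∑ ai, ∑ bi, (PA (gG bi) ai - PA b2 ai) * (PB (fD ai) bi - PB a2 bi) = 0 := by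
    have expand : ∀ ai bi, (PA (gG bi) ai - PA b2 ai) * (PB (fD ai) bi - PB a2 bi)
        = PA (gG bi) ai * PB (fD ai) bi - PA b2 ai * PB (fD ai) bi
          - PA (gG bi) ai * PB a2 bi + PA b2 ai * PB a2 bi := by
      intro ai bi; ring
    simp only [expand, Finset.sum_add_distrib, Finset.sum_sub_distrib]
    rw [e1, e2, e3, e4]; ring
  have single : ∑ ai, ∑ bi, (PA (gG bi) ai - PA b2 ai) * (PB (fD ai) bi - PB a2 bi)
      = (PA b1 astar - PA b2 astar) * (PB a1 bstar - PB a2 bstar) := by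
    rw [Finset.sum_eq_single astar]
    · rw [Finset.sum_eq_single bstar]
      · simp [hfD, hgG]
      · intro bi _ hbi
        simp [hgG, hbi]
      · intro habs; exact absurd (Finset.mem_univ bstar) habs
    · intro ai _ hai
      apply Finset.sum_eq_zero
      intro bi _
      simp [hfD, hai]
    · intro habs; exact absurd (Finset.mem_univ astar) habs
  rw [single] at comb
  rcases mul_eq_zero.mp comb with h0 | h0
  · exact absurd (sub_eq_zero.mp h0) hne
  · exact sub_eq_zero.mp h0
end

section
/- Let A, B, C be classical split nodes with binary variables A^in, A^out, B^in, B^out, C^in, C^out. Define the channel P(A^in|B^out,C^out) by P(A^in=0|B^out,C^out) taking values 0.4, 0.3, 0.8, 0.3 on (B^out,C^out) = (0,0), (0,1), (1,0), (1,1) respectively (and P(A^in=1|·) the complement), and define P(B^in|A^out,C^out) by P(B^in=0|A^out,C^out) taking values 0.5, 0.3, 0.25, 0.1 on (A^out,C^out) = (0,0), (0,1), (1,0), (1,1) respectively. Then for every probability distribution P(C^in), the product κ = P(A^in|B^out,C^out)·P(B^in|A^out,C^out)·P(C^in) is not a classical process over the three split nodes A, B, C. -/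
open BigOperators

/-- `κ` is a classical process over the three split nodes `A`, `B`, `C`
(with binary input and output variables, `false = 0` and `true = 1`):
it takes values in `[0,1]` and yields total probability one for every choice of classical
channels `P(A^out|A^in)`, `P(B^out|B^in)`, `P(C^out|C^in)` at the three nodes. -/
def IsClassicalProcess3Bool
    (κ : Bool → Bool → Bool → Bool → Bool → Bool → ℝ) : Prop :=
  (∀ ai ao bi bo ci co, 0 ≤ κ ai ao bi bo ci co ∧ κ ai ao bi bo ci co ≤ 1) ∧
    ∀ (QA QB QC : Bool → Bool → ℝ),
      IsClassicalChannel QA → IsClassicalChannel QB → IsClassicalChannel QC →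
      ∑ ai, ∑ ao, ∑ bi, ∑ bo, ∑ ci, ∑ co,
        κ ai ao bi bo ci co * QA ai ao * QB bi bo * QC ci co = 1

/-- `P(A^in = 0 | B^out, C^out)`: the values 0.4, 0.3, 0.8, 0.3 on
`(B^out, C^out) = (0,0), (0,1), (1,0), (1,1)`. -/
def PA0 (b c : Bool) : ℝ :=
  if b then (if c then 0.3 else 0.8) else (if c then 0.3 else 0.4)

/-- The channel `P(A^in | B^out, C^out)`. -/
def PA (ain b c : Bool) : ℝ := if ain then 1 - PA0 b c else PA0 b c

/-- `P(B^in = 0 | A^out, C^out)`: the values 0.5, 0.3, 0.25, 0.1 on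
`(A^out, C^out) = (0,0), (0,1), (1,0), (1,1)`. -/
def PB0 (a c : Bool) : ℝ :=
  if a then (if c then 0.1 else 0.25) else (if c then 0.3 else 0.5)

/-- The channel `P(B^in | A^out, C^out)`. -/
def PB (bin a c : Bool) : ℝ := if bin then 1 - PB0 a c else PB0 a c

/-- For the channels `P(A^in|B^out,C^out)` and `P(B^in|A^out,C^out)` defined above and
every probability distribution `P(C^in)`, the product
`κ = P(A^in|B^out,C^out)·P(B^in|A^out,C^out)·P(C^in)` is **not** a classical process
over the three split nodes `A`, `B`, `C`. -/
theorem product_of_commuting_channels_not_a_process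
    (PC : Bool → ℝ) (hPC0 : ∀ ci, 0 ≤ PC ci) (hPC1 : ∑ ci, PC ci = 1) :
    ¬ IsClassicalProcess3Bool
        (fun ain aout bin bout cin cout => PA ain bout cout * PB bin aout cout * PC cin) := by
  rintro ⟨-, h⟩
  have hQA : IsClassicalChannel (fun x y : Bool => if x = y then (1:ℝ) else 0) := by
    constructor
    · intro x y; dsimp only; split <;> norm_num
    · intro x; cases x <;> simp
  have hQC : IsClassicalChannel (fun _ y : Bool => if y then (0:ℝ) else 1) := by
    constructor
    · intro x y; dsimp only; split <;> norm_num
    · intro x; simp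
  have := h _ _ _ hQA hQA hQC
  simp only [Fintype.sum_bool, PA, PB, PA0, PB0] at this
  norm_num at this
  have h1 : PC true + PC false = 1 := by
    simpa [Fintype.sum_bool] using hPC1
  linarith
end

section
/- Causal factorization of unitary channels: let ρ^U_{C_1…C_l|B_1…B_k} be the CJ operator of a unitary channel U from ⊗_j H_{B_j} to ⊗_i H_{C_i}, and for each output C_i let Pa(C_i) ⊆ {B_1,…,B_k} be the set of inputs B_j that influence C_i (i.e., such that it is not the case that B_j ↛ C_i). Then ρ^U_{C_1…C_l|B_1…B_k} = ∏_{i=1}^l ρ_{C_i|Pa(C_i)}, where each factor ρ_{C_i|Pa(C_i)} is the CJ operator of a channel from ⊗_{B∈Pa(C_i)} H_B to H_{C_i} (padded with identity on all other tensor factors), and these factors pairwise commute: [ρ_{C_i|Pa(C_i)}, ρ_{C_j|Pa(C_j)}] = 0 for all i, j. -/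
open Matrix BigOperators
open scoped ComplexOrder
noncomputable section

variable {k l : ℕ}

/-- The CJ operator `ρ^U` of the unitary channel `U(·)U†`, where
`U : ⊗_j H_{B_j} → ⊗_i H_{C_i}`; it is an operator on `(⊗_i H_{C_i}) ⊗ (⊗_j H*_{B_j})`. -/
def cjOf {B : Fin k → Type} {C : Fin l → Type}
    (U : Matrix ((i : Fin l) → C i) ((j : Fin k) → B j) ℂ) :
    Matrix ((((i : Fin l) → C i)) × ((j : Fin k) → B j))
           ((((i : Fin l) → C i)) × ((j : Fin k) → B j)) ℂ :=
  Matrix.of fun p q => U p.1 p.2 * star (U q.1 q.2)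

/-- The marginal of the CJ operator of `U(·)U†` obtained by tracing out all output
systems except `C_i`; an operator on `H_{C_i} ⊗ (⊗_j H*_{B_j})`. -/
def margOut {B : Fin k → Type} {C : Fin l → Type}
    [∀ i, Fintype (C i)] [∀ i, DecidableEq (C i)]
    (U : Matrix ((i : Fin l) → C i) ((j : Fin k) → B j) ℂ) (i : Fin l) :
    Matrix (C i × ((j : Fin k) → B j)) (C i × ((j : Fin k) → B j)) ℂ :=
  Matrix.of fun p q => ∑ c : (i' : Fin l) → C i',
    if c i = p.1 then U c p.2 * star (U (Function.update c i q.1) q.2) else 0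

/-- `B_j` does not influence `C_i` through the unitary `U` (written `B_j ↛ C_i`): the
marginal of `ρ^U` on `C_i` is of the form `ρ^M ⊗ 1_{(B_j)*}`, i.e. it is diagonal in and
independent of the `B_j` tensor factor. -/
def DoesNotInfluence {B : Fin k → Type} {C : Fin l → Type}
    [∀ j, Fintype (B j)] [∀ j, DecidableEq (B j)]
    [∀ i, Fintype (C i)] [∀ i, DecidableEq (C i)]
    (U : Matrix ((i : Fin l) → C i) ((j : Fin k) → B j) ℂ) (j : Fin k) (i : Fin l) : Prop :=
  ∀ (ci ci' : C i) (b b' : (j' : Fin k) → B j') (y : B j),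
    margOut U i (ci, b) (ci', b') =
      (if b j = b' j then 1 else 0) *
        margOut U i (ci, Function.update b j y) (ci', Function.update b' j y)

/-- `N`, an operator on `H_{C_i} ⊗ (⊗_j H*_{B_j})`, is the CJ operator of a channel from
`⊗_j H_{B_j}` to `H_{C_i}`. -/
def IsChannelCJPi {B : Fin k → Type} {Ci : Type}
    [∀ j, Fintype (B j)] [∀ j, DecidableEq (B j)] [Fintype Ci]
    (N : Matrix (Ci × ((j : Fin k) → B j)) (Ci × ((j : Fin k) → B j)) ℂ) : Prop :=
  N.PosSemidef ∧
    ∀ b b' : (j : Fin k) → B j, ∑ ci, N (ci, b) (ci, b') = if b = b' then (1 : ℂ) else 0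

/-- `N` acts as the identity on every tensor factor `B_j` with `j ∉ S`: it is a channel
from `⊗_{j ∈ S} H_{B_j}` to `H_{C_i}` padded with the identity on the other factors. -/
def PaddedOn {B : Fin k → Type} {Ci : Type}
    [∀ j, Fintype (B j)] [∀ j, DecidableEq (B j)]
    (N : Matrix (Ci × ((j : Fin k) → B j)) (Ci × ((j : Fin k) → B j)) ℂ)
    (S : Set (Fin k)) : Prop :=
  ∀ j, j ∉ S → ∀ (ci ci' : Ci) (b b' : (j' : Fin k) → B j') (y : B j),
    N (ci, b) (ci', b') =
      (if b j = b' j then 1 else 0) *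
        N (ci, Function.update b j y) (ci', Function.update b' j y)

/-- The factor `ρ_{C_i|Pa(C_i)}` (given as an operator `N` on `H_{C_i} ⊗ (⊗_j H*_{B_j})`)
padded with the identity on all output factors `C_{i'}`, `i' ≠ i`. -/
def padFactor {B : Fin k → Type} {C : Fin l → Type}
    [∀ i, DecidableEq (C i)]
    (i : Fin l)
    (N : Matrix (C i × ((j : Fin k) → B j)) (C i × ((j : Fin k) → B j)) ℂ) :
    Matrix ((((i' : Fin l) → C i')) × ((j : Fin k) → B j))
           ((((i' : Fin l) → C i')) × ((j : Fin k) → B j)) ℂ :=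
  Matrix.of fun p q =>
    (if ∀ i' : Fin l, i' ≠ i → p.1 i' = q.1 i' then 1 else 0) *
      N (p.1 i, p.2) (q.1 i, q.2)

section Aux
set_option linter.unusedSectionVars false

lemma sum_delta {α : Type*} [Fintype α] [DecidableEq α] (a : α) (F : α → ℂ) :
    ∑ x, (if x = a then (1:ℂ) else 0) * F x = F a := by
  simp only [ite_mul, one_mul, zero_mul]
  rw [Finset.sum_ite_eq' Finset.univ a F]
  simp

lemma ite_and_eq_mul (P Q : Prop) [Decidable P] [Decidable Q] :
    (if P ∧ Q then (1:ℂ) else 0) = (if P then (1:ℂ) else 0) * (if Q then (1:ℂ) else 0) := by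
  by_cases hP : P <;> by_cases hQ : Q <;> simp [hP, hQ]

lemma ite_and_mul (P Q : Prop) [Decidable P] [Decidable Q] (x : ℂ) :
    (if P ∧ Q then (1:ℂ) else 0) * x
      = (if P then (1:ℂ) else 0) * ((if Q then (1:ℂ) else 0) * x) := by
  by_cases hP : P <;> by_cases hQ : Q <;> simp [hP, hQ]

variable {k l : ℕ} {B : Fin k → Type} {C : Fin l → Type}
    [∀ j, Fintype (B j)] [∀ j, DecidableEq (B j)]
    [∀ i, Fintype (C i)] [∀ i, DecidableEq (C i)]

/-- merge: `c` on `T`, `e` off `T`. -/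
def mrg (T : Finset (Fin l)) (c e : (i : Fin l) → C i) : (i : Fin l) → C i :=
  fun i => if i ∈ T then c i else e i

lemma mrg_eq_iff (T : Finset (Fin l)) (c e f : (i : Fin l) → C i) :
    f = mrg T c e ↔ (∀ i ∈ T, f i = c i) ∧ (∀ i ∉ T, f i = e i) := by
  constructor
  · rintro rfl
    constructor <;> intro i hi <;> simp [mrg, hi]
  · rintro ⟨h1, h2⟩
    funext i
    by_cases hi : i ∈ T
    · simp [mrg, hi, h1 i hi]
    · simp [mrg, hi, h2 i hi]

lemma self_eq_mrg_iff (T : Finset (Fin l)) (c e : (i : Fin l) → C i) :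
    e = mrg T c e ↔ ∀ i ∈ T, e i = c i := by
  rw [mrg_eq_iff]
  simp

/-- The marginal CJ operator on kept outputs `T`, padded with identity elsewhere
(symmetric double-sum form). -/
def rho (U : Matrix ((i : Fin l) → C i) ((j : Fin k) → B j) ℂ) (T : Finset (Fin l)) :
    Matrix ((((i : Fin l) → C i)) × ((j : Fin k) → B j))
           ((((i : Fin l) → C i)) × ((j : Fin k) → B j)) ℂ :=
  Matrix.of fun p q =>
    (if ∀ i ∉ T, p.1 i = q.1 i then (1:ℂ) else 0) *
      ∑ e : (i : Fin l) → C i, ∑ f : (i : Fin l) → C i,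
        (if e = mrg T p.1 e ∧ f = mrg T q.1 f ∧ (∀ i ∉ T, e i = f i) then (1:ℂ) else 0) *
          (U e p.2 * star (U f q.2))

lemma rho_apply_single (U : Matrix ((i : Fin l) → C i) ((j : Fin k) → B j) ℂ)
    (T : Finset (Fin l)) (p q : (((i : Fin l) → C i)) × ((j : Fin k) → B j)) :
    rho U T p q =
      (if ∀ i ∉ T, p.1 i = q.1 i then (1:ℂ) else 0) *
        ∑ e : (i : Fin l) → C i,
          (if e = mrg T p.1 e then (1:ℂ) else 0) *
            (U e p.2 * star (U (mrg T q.1 e) q.2)) := by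
  unfold rho
  rw [Matrix.of_apply]
  congr 1
  apply Finset.sum_congr rfl
  intro e _
  have hcond : ∀ f : (i : Fin l) → C i,
      (e = mrg T p.1 e ∧ f = mrg T q.1 f ∧ (∀ i ∉ T, e i = f i)) ↔
        (f = mrg T q.1 e ∧ e = mrg T p.1 e) := by
    intro f
    constructor
    · rintro ⟨h1, h2, h3⟩
      refine ⟨?_, h1⟩
      rw [mrg_eq_iff]
      exact ⟨fun i hi => ((self_eq_mrg_iff T q.1 f).mp h2) i hi, fun i hi => (h3 i hi).symm⟩
    · rintro ⟨h1, h2⟩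
      refine ⟨h2, ?_, ?_⟩
      · rw [self_eq_mrg_iff]
        intro i hi
        rw [h1]; simp [mrg, hi]
      · intro i hi
        rw [h1]; simp [mrg, hi]
  calc ∑ f : (i : Fin l) → C i,
        (if e = mrg T p.1 e ∧ f = mrg T q.1 f ∧ (∀ i ∉ T, e i = f i) then (1:ℂ) else 0) *
          (U e p.2 * star (U f q.2))
      = ∑ f : (i : Fin l) → C i,
        (if f = mrg T q.1 e then (1:ℂ) else 0) *
          ((if e = mrg T p.1 e then (1:ℂ) else 0) * (U e p.2 * star (U f q.2))) := by
        apply Finset.sum_congr rfl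
        intro f _
        rw [if_congr (hcond f) rfl rfl, ite_and_mul]
    _ = (if e = mrg T p.1 e then (1:ℂ) else 0) * (U e p.2 * star (U (mrg T q.1 e) q.2)) := by
        exact sum_delta (mrg T q.1 e)
          (fun f => (if e = mrg T p.1 e then (1:ℂ) else 0) * (U e p.2 * star (U f q.2)))

lemma delta_row {U : Matrix ((i : Fin l) → C i) ((j : Fin k) → B j) ℂ}
    (hU₁ : U * U.conjTranspose = 1) (x y : (i : Fin l) → C i) :
    ∑ g, U x g * star (U y g) = if x = y then (1:ℂ) else 0 := by
  have h : (U * U.conjTranspose) x y = (1 : Matrix _ _ ℂ) x y := by rw [hU₁]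
  simpa [Matrix.mul_apply, Matrix.conjTranspose_apply, Matrix.one_apply] using h

lemma delta_col {U : Matrix ((i : Fin l) → C i) ((j : Fin k) → B j) ℂ}
    (hU₂ : U.conjTranspose * U = 1) (b b' : (j : Fin k) → B j) :
    ∑ e, U e b * star (U e b') = if b = b' then (1:ℂ) else 0 := by
  have h : (U.conjTranspose * U) b' b = (1 : Matrix _ _ ℂ) b' b := by rw [hU₂]
  simp only [Matrix.mul_apply, Matrix.conjTranspose_apply, Matrix.one_apply] at h
  calc ∑ e, U e b * star (U e b') = ∑ e, star (U e b') * U e b := by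
        apply Finset.sum_congr rfl; intros; ring
    _ = if b = b' then (1:ℂ) else 0 := by
        rw [h]
        by_cases hb : b = b'
        · simp [hb]
        · rw [if_neg hb, if_neg (Ne.symm hb)]

lemma rho_hermitian (U : Matrix ((i : Fin l) → C i) ((j : Fin k) → B j) ℂ)
    (T : Finset (Fin l)) : (rho U T).conjTranspose = rho U T := by
  ext p q
  rw [Matrix.conjTranspose_apply]
  unfold rho
  simp only [Matrix.of_apply, star_mul', star_sum, star_star,
    apply_ite (star : ℂ → ℂ), star_one, star_zero]
  congr 1
  · exact if_congr (by constructor <;> intro h i hi <;> exact (h i hi).symm) rfl rfl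
  · rw [Finset.sum_comm]
    apply Finset.sum_congr rfl; intro x _
    apply Finset.sum_congr rfl; intro y _
    rw [if_congr (show (y = mrg T q.1 y ∧ x = mrg T p.1 x ∧ ∀ i ∉ T, y i = x i) ↔
        (x = mrg T p.1 x ∧ y = mrg T q.1 y ∧ ∀ i ∉ T, x i = y i) by
      constructor <;> rintro ⟨h1, h2, h3⟩ <;> exact ⟨h2, h1, fun i hi => (h3 i hi).symm⟩)
      rfl rfl]
    ring

lemma rho_empty {U : Matrix ((i : Fin l) → C i) ((j : Fin k) → B j) ℂ}
    (hU₂ : U.conjTranspose * U = 1) : rho U ∅ = 1 := by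
  ext p q
  rw [rho_apply_single]
  have hmrg : ∀ e : (i : Fin l) → C i, mrg (∅ : Finset (Fin l)) q.1 e = e := by
    intro e; funext i; simp [mrg]
  have hc : ∀ e : (i : Fin l) → C i, e = mrg (∅ : Finset (Fin l)) p.1 e := by
    intro e; rw [self_eq_mrg_iff]; simp
  calc (if ∀ i ∉ (∅ : Finset (Fin l)), p.1 i = q.1 i then (1:ℂ) else 0) *
        ∑ e : (i : Fin l) → C i,
          (if e = mrg ∅ p.1 e then (1:ℂ) else 0) * (U e p.2 * star (U (mrg ∅ q.1 e) q.2))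
      = (if ∀ i, p.1 i = q.1 i then (1:ℂ) else 0) * ∑ e, U e p.2 * star (U e q.2) := by
        congr 1
        · exact if_congr (by simp) rfl rfl
        · apply Finset.sum_congr rfl; intro e _; rw [if_pos (hc e), hmrg e, one_mul]
    _ = (1 : Matrix _ _ ℂ) p q := by
        rw [delta_col hU₂, Matrix.one_apply]
        by_cases h1 : p.1 = q.1 <;> by_cases h2 : p.2 = q.2
        · rw [if_pos (funext_iff.mp h1), if_pos h2, if_pos (Prod.ext_iff.mpr ⟨h1, h2⟩), one_mul]
        · rw [if_neg h2, if_neg (fun h => h2 (congrArg Prod.snd h)), mul_zero]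
        · rw [if_neg (fun h => h1 (funext h)), if_neg (fun h => h1 (congrArg Prod.fst h)), zero_mul]
        · rw [if_neg (fun h => h1 (funext h)), if_neg (fun h => h1 (congrArg Prod.fst h)), zero_mul]

lemma rho_univ (U : Matrix ((i : Fin l) → C i) ((j : Fin k) → B j) ℂ) :
    rho U Finset.univ = cjOf U := by
  ext p q
  rw [rho_apply_single]
  have hmrg : ∀ e : (i : Fin l) → C i, mrg Finset.univ q.1 e = q.1 := by
    intro e; funext i; simp [mrg]
  have hcond : ∀ e : (i : Fin l) → C i, (e = mrg Finset.univ p.1 e) ↔ e = p.1 := by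
    intro e; rw [self_eq_mrg_iff]; simp [funext_iff]
  calc (if ∀ i ∉ Finset.univ, p.1 i = q.1 i then (1:ℂ) else 0) *
        ∑ e : (i : Fin l) → C i, (if e = mrg Finset.univ p.1 e then (1:ℂ) else 0) *
          (U e p.2 * star (U (mrg Finset.univ q.1 e) q.2))
      = ∑ e : (i : Fin l) → C i, (if e = p.1 then (1:ℂ) else 0) *
          (U e p.2 * star (U q.1 q.2)) := by
        rw [if_pos (by simp), one_mul]
        apply Finset.sum_congr rfl; intro e _
        rw [if_congr (hcond e) rfl rfl, hmrg e]
    _ = U p.1 p.2 * star (U q.1 q.2) := sum_delta p.1 _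
    _ = cjOf U p q := rfl
lemma piSplitAt_symm_apply_self (i : Fin l) (x : C i)
    (r : (j : {j : Fin l // j ≠ i}) → C j) :
    (Equiv.piSplitAt i C).symm (x, r) i = x := by
  simp [Equiv.piSplitAt_symm_apply]

lemma update_piSplitAt (i : Fin l) (x y : C i)
    (r : (j : {j : Fin l // j ≠ i}) → C j) :
    Function.update ((Equiv.piSplitAt i C).symm (x, r)) i y
      = (Equiv.piSplitAt i C).symm (y, r) := by
  funext j
  by_cases h : j = i
  · subst h; simp [Equiv.piSplitAt_symm_apply]
  · simp [Function.update, h, Equiv.piSplitAt_symm_apply]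

lemma margOut_apply (U : Matrix ((i : Fin l) → C i) ((j : Fin k) → B j) ℂ) (i : Fin l)
    (p q : C i × ((j : Fin k) → B j)) :
    margOut U i p q = ∑ r : (j : {j : Fin l // j ≠ i}) → C j,
      U ((Equiv.piSplitAt i C).symm (p.1, r)) p.2 *
        star (U ((Equiv.piSplitAt i C).symm (q.1, r)) q.2) := by
  unfold margOut
  rw [Matrix.of_apply, ← Equiv.sum_comp (Equiv.piSplitAt i C).symm, Fintype.sum_prod_type]
  calc ∑ x : C i, ∑ r : (j : {j : Fin l // j ≠ i}) → C j,
        (if (Equiv.piSplitAt i C).symm (x, r) i = p.1 then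
          U ((Equiv.piSplitAt i C).symm (x, r)) p.2 *
            star (U (Function.update ((Equiv.piSplitAt i C).symm (x, r)) i q.1) q.2) else 0)
      = ∑ x : C i, (if x = p.1 then (1:ℂ) else 0) *
          ∑ r : (j : {j : Fin l // j ≠ i}) → C j,
            U ((Equiv.piSplitAt i C).symm (x, r)) p.2 *
              star (U ((Equiv.piSplitAt i C).symm (q.1, r)) q.2) := by
        apply Finset.sum_congr rfl; intro x _
        rw [Finset.mul_sum]
        apply Finset.sum_congr rfl; intro r _
        rw [piSplitAt_symm_apply_self, update_piSplitAt]
        by_cases h : x = p.1 <;> simp [h]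
    _ = _ := by rw [sum_delta]
lemma margOut_posSemidef (U : Matrix ((i : Fin l) → C i) ((j : Fin k) → B j) ℂ)
    (i : Fin l) : (margOut U i).PosSemidef := by
  have : margOut U i =
      (Matrix.of fun (p : C i × ((j : Fin k) → B j))
          (r : (j : {j : Fin l // j ≠ i}) → C j) =>
        U ((Equiv.piSplitAt i C).symm (p.1, r)) p.2) *
      (Matrix.of fun (p : C i × ((j : Fin k) → B j))
          (r : (j : {j : Fin l // j ≠ i}) → C j) =>
        U ((Equiv.piSplitAt i C).symm (p.1, r)) p.2).conjTranspose := by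
    ext p q
    rw [margOut_apply, Matrix.mul_apply]
    simp [Matrix.conjTranspose_apply]
  rw [this]
  exact Matrix.posSemidef_self_mul_conjTranspose _

lemma margOut_trace {U : Matrix ((i : Fin l) → C i) ((j : Fin k) → B j) ℂ}
    (hU₂ : U.conjTranspose * U = 1) (i : Fin l) (b b' : (j : Fin k) → B j) :
    ∑ ci : C i, margOut U i (ci, b) (ci, b') = if b = b' then (1:ℂ) else 0 := by
  calc ∑ ci : C i, margOut U i (ci, b) (ci, b')
      = ∑ ci : C i, ∑ r : (j : {j : Fin l // j ≠ i}) → C j,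
          U ((Equiv.piSplitAt i C).symm (ci, r)) b *
            star (U ((Equiv.piSplitAt i C).symm (ci, r)) b') := by
        apply Finset.sum_congr rfl; intro ci _; rw [margOut_apply]
    _ = ∑ c : (i' : Fin l) → C i', U c b * star (U c b') := by
        rw [← Equiv.sum_comp (Equiv.piSplitAt i C).symm
          (fun c => U c b * star (U c b')), Fintype.sum_prod_type]
    _ = if b = b' then (1:ℂ) else 0 := delta_col hU₂ b b'

lemma margOut_isChannel {U : Matrix ((i : Fin l) → C i) ((j : Fin k) → B j) ℂ}
    (hU₂ : U.conjTranspose * U = 1) (i : Fin l) : IsChannelCJPi (margOut U i) :=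
  ⟨margOut_posSemidef U i, fun b b' => margOut_trace hU₂ i b b'⟩

lemma padFactor_margOut (U : Matrix ((i : Fin l) → C i) ((j : Fin k) → B j) ℂ)
    (i : Fin l) : padFactor i (margOut U i) = rho U {i} := by
  ext p q
  rw [rho_apply_single]
  unfold padFactor margOut
  rw [Matrix.of_apply, Matrix.of_apply]
  congr 1
  · exact if_congr (by simp) rfl rfl
  · apply Finset.sum_congr rfl
    intro e _
    have h1 : (e = mrg {i} p.1 e) ↔ e i = p.1 i := by
      rw [self_eq_mrg_iff]; simp
    have h2 : mrg ({i} : Finset (Fin l)) q.1 e = Function.update e i (q.1 i) := by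
      funext j
      by_cases h : j = i
      · subst h; simp [mrg]
      · simp [mrg, h, Function.update, h]
    by_cases h : e i = p.1 i
    · rw [if_pos ((h1).mpr h), if_pos h, one_mul, h2]
    · rw [if_neg (fun hh => h (h1.mp hh)), if_neg h, zero_mul]
lemma rho_mul_single {U : Matrix ((i : Fin l) → C i) ((j : Fin k) → B j) ℂ}
    (hU₁ : U * U.conjTranspose = 1) {T : Finset (Fin l)} {i : Fin l} (hi : i ∉ T) :
    rho U T * rho U {i} = rho U (insert i T) := by
  ext p q
  have hmain :
    (rho U T * rho U {i}) p q
      = ∑ d : (i' : Fin l) → C i',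
          ∑ e : (i' : Fin l) → C i',
            ((if ∀ j ∉ T, p.1 j = d j then (1:ℂ) else 0) *
             (if ∀ j ∉ ({i} : Finset (Fin l)), d j = q.1 j then (1:ℂ) else 0) *
             (if e = mrg T p.1 e then (1:ℂ) else 0) *
             (if mrg T d e = mrg {i} d (mrg T d e) then (1:ℂ) else 0)) *
            (U e p.2 * star (U (mrg {i} q.1 (mrg T d e)) q.2)) := by
    rw [Matrix.mul_apply]
    rw [show (∑ x, rho U T p x * rho U {i} x q)
        = ∑ d : (i' : Fin l) → C i', ∑ g : (j : Fin k) → B j,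
            rho U T p (d, g) * rho U {i} (d, g) q from
      Fintype.sum_prod_type _]
    apply Finset.sum_congr rfl
    intro d _
    calc ∑ g : (j : Fin k) → B j, rho U T p (d, g) * rho U {i} (d, g) q
        = ∑ g : (j : Fin k) → B j,
            ∑ e : (i' : Fin l) → C i', ∑ f : (i' : Fin l) → C i',
              ((if ∀ j ∉ T, p.1 j = d j then (1:ℂ) else 0) *
               (if ∀ j ∉ ({i} : Finset (Fin l)), d j = q.1 j then (1:ℂ) else 0) *
               (if e = mrg T p.1 e then (1:ℂ) else 0) *
               (if f = mrg {i} d f then (1:ℂ) else 0)) *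
              ((U e p.2 * star (U (mrg {i} q.1 f) q.2)) *
                (U f g * star (U (mrg T d e) g))) := by
          apply Finset.sum_congr rfl
          intro g _
          rw [rho_apply_single, rho_apply_single]
          simp only [Finset.mul_sum, Finset.sum_mul]
          rw [Finset.sum_comm]
          apply Finset.sum_congr rfl; intro e _
          apply Finset.sum_congr rfl; intro f _
          ring
      _ = ∑ e : (i' : Fin l) → C i', ∑ f : (i' : Fin l) → C i',
            ((if ∀ j ∉ T, p.1 j = d j then (1:ℂ) else 0) *
             (if ∀ j ∉ ({i} : Finset (Fin l)), d j = q.1 j then (1:ℂ) else 0) *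
             (if e = mrg T p.1 e then (1:ℂ) else 0) *
             (if f = mrg {i} d f then (1:ℂ) else 0)) *
            ((U e p.2 * star (U (mrg {i} q.1 f) q.2)) *
              (∑ g : (j : Fin k) → B j, U f g * star (U (mrg T d e) g))) := by
          rw [Finset.sum_comm]
          apply Finset.sum_congr rfl; intro e _
          rw [Finset.sum_comm]
          apply Finset.sum_congr rfl; intro f _
          rw [Finset.mul_sum, Finset.mul_sum]
      _ = ∑ e : (i' : Fin l) → C i',
            ∑ f : (i' : Fin l) → C i',
              (if f = mrg T d e then (1:ℂ) else 0) *
              (((if ∀ j ∉ T, p.1 j = d j then (1:ℂ) else 0) *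
                (if ∀ j ∉ ({i} : Finset (Fin l)), d j = q.1 j then (1:ℂ) else 0) *
                (if e = mrg T p.1 e then (1:ℂ) else 0) *
                (if f = mrg {i} d f then (1:ℂ) else 0)) *
               (U e p.2 * star (U (mrg {i} q.1 f) q.2))) := by
          apply Finset.sum_congr rfl; intro e _
          apply Finset.sum_congr rfl; intro f _
          rw [delta_row hU₁ f (mrg T d e)]
          ring
      _ = ∑ e : (i' : Fin l) → C i',
            ((if ∀ j ∉ T, p.1 j = d j then (1:ℂ) else 0) *
             (if ∀ j ∉ ({i} : Finset (Fin l)), d j = q.1 j then (1:ℂ) else 0) *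
             (if e = mrg T p.1 e then (1:ℂ) else 0) *
             (if mrg T d e = mrg {i} d (mrg T d e) then (1:ℂ) else 0)) *
            (U e p.2 * star (U (mrg {i} q.1 (mrg T d e)) q.2)) := by
          apply Finset.sum_congr rfl; intro e _
          exact sum_delta (mrg T d e) _
  rw [hmain, rho_apply_single]
  have hd0 : ∀ j ∉ T, mrg T q.1 p.1 j = p.1 j := by intro j hj; simp [mrg, hj]
  calc ∑ d : (i' : Fin l) → C i',
        ∑ e : (i' : Fin l) → C i',
          ((if ∀ j ∉ T, p.1 j = d j then (1:ℂ) else 0) *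
           (if ∀ j ∉ ({i} : Finset (Fin l)), d j = q.1 j then (1:ℂ) else 0) *
           (if e = mrg T p.1 e then (1:ℂ) else 0) *
           (if mrg T d e = mrg {i} d (mrg T d e) then (1:ℂ) else 0)) *
          (U e p.2 * star (U (mrg {i} q.1 (mrg T d e)) q.2))
      = ∑ e : (i' : Fin l) → C i',
          ∑ d : (i' : Fin l) → C i',
            (if d = mrg T q.1 p.1 then (1:ℂ) else 0) *
            (((if ∀ j ∉ insert i T, p.1 j = q.1 j then (1:ℂ) else 0) *
              (if e = mrg T p.1 e then (1:ℂ) else 0) *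
              (if e i = p.1 i then (1:ℂ) else 0)) *
             (U e p.2 * star (U (mrg {i} q.1 (mrg T d e)) q.2))) := by
        rw [Finset.sum_comm]
        apply Finset.sum_congr rfl; intro e _
        apply Finset.sum_congr rfl; intro d _
        have h4 : (mrg T d e = mrg {i} d (mrg T d e)) ↔ e i = d i := by
          rw [self_eq_mrg_iff]
          constructor
          · intro h; have := h i (Finset.mem_singleton_self i); simpa [mrg, hi] using this
          · intro h j hj
            rw [Finset.mem_singleton] at hj; subst hj
            simpa [mrg, hi] using h
        rw [if_congr h4 rfl rfl]
        by_cases hd : d = mrg T q.1 p.1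
        · subst hd
          have hA : ∀ j ∉ T, p.1 j = mrg T q.1 p.1 j := fun j hj => (hd0 j hj).symm
          have hei : mrg T q.1 p.1 i = p.1 i := hd0 i hi
          have hB : (∀ j ∉ ({i} : Finset (Fin l)), mrg T q.1 p.1 j = q.1 j) ↔
              (∀ j ∉ insert i T, p.1 j = q.1 j) := by
            constructor
            · intro h j hj
              rw [Finset.mem_insert] at hj
              push_neg at hj
              rw [← hd0 j hj.2]
              exact h j (by simp [hj.1])
            · intro h j hj
              rw [Finset.mem_singleton] at hj
              by_cases hjT : j ∈ T
              · simp [mrg, hjT]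
              · rw [hd0 j hjT]
                exact h j (by simp [Finset.mem_insert, hj, hjT])
          rw [if_pos hA, if_congr hB rfl rfl, if_pos rfl, hei]
          ring
        · rw [if_neg hd, zero_mul]
          by_cases hA : ∀ j ∉ T, p.1 j = d j
          · by_cases hB : ∀ j ∉ ({i} : Finset (Fin l)), d j = q.1 j
            · exfalso
              apply hd
              funext j
              by_cases hjT : j ∈ T
              · rw [hB j (by simp; rintro rfl; exact hi hjT)]; simp [mrg, hjT]
              · rw [← hA j hjT]; simp [mrg, hjT]
            · rw [if_neg hB]
              ring
          · rw [if_neg hA]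
            ring
    _ = ∑ e : (i' : Fin l) → C i',
          ((if ∀ j ∉ insert i T, p.1 j = q.1 j then (1:ℂ) else 0) *
           (if e = mrg T p.1 e then (1:ℂ) else 0) *
           (if e i = p.1 i then (1:ℂ) else 0)) *
          (U e p.2 * star (U (mrg {i} q.1 (mrg T (mrg T q.1 p.1) e)) q.2)) := by
        apply Finset.sum_congr rfl; intro e _
        exact sum_delta (mrg T q.1 p.1) _
    _ = (if ∀ j ∉ insert i T, p.1 j = q.1 j then (1:ℂ) else 0) *
        ∑ e : (i' : Fin l) → C i',
          (if e = mrg (insert i T) p.1 e then (1:ℂ) else 0) *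
          (U e p.2 * star (U (mrg (insert i T) q.1 e) q.2)) := by
        rw [Finset.mul_sum]
        apply Finset.sum_congr rfl; intro e _
        have hm : mrg ({i} : Finset (Fin l)) q.1 (mrg T (mrg T q.1 p.1) e)
            = mrg (insert i T) q.1 e := by
          funext j
          by_cases hj1 : j = i
          · subst hj1; simp [mrg]
          · by_cases hj2 : j ∈ T
            · simp [mrg, hj1, hj2]
            · simp [mrg, hj1, hj2]
        have hE : (e = mrg (insert i T) p.1 e) ↔
            ((e = mrg T p.1 e) ∧ e i = p.1 i) := by
          rw [self_eq_mrg_iff, self_eq_mrg_iff]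
          constructor
          · intro h
            exact ⟨fun j hj => h j (Finset.mem_insert_of_mem hj),
              h i (Finset.mem_insert_self i T)⟩
          · rintro ⟨h1, h2⟩ j hj
            rw [Finset.mem_insert] at hj
            rcases hj with rfl | hj
            · exact h2
            · exact h1 j hj
        rw [hm, if_congr hE rfl rfl, ite_and_eq_mul]
        ring
lemma single_mul_rho {U : Matrix ((i : Fin l) → C i) ((j : Fin k) → B j) ℂ}
    (hU₁ : U * U.conjTranspose = 1) {T : Finset (Fin l)} {i : Fin l} (hi : i ∉ T) :
    rho U {i} * rho U T = rho U (insert i T) := by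
  have h := congrArg Matrix.conjTranspose (rho_mul_single hU₁ hi)
  rwa [Matrix.conjTranspose_mul, rho_hermitian, rho_hermitian, rho_hermitian] at h

lemma rho_list_prod {U : Matrix ((i : Fin l) → C i) ((j : Fin k) → B j) ℂ}
    (hU₁ : U * U.conjTranspose = 1) (hU₂ : U.conjTranspose * U = 1) :
    ∀ L : List (Fin l), L.Nodup →
      ((L.map fun i => rho U {i}).prod) = rho U L.toFinset := by
  intro L
  induction L with
  | nil => intro _; simp [rho_empty hU₂]
  | cons i L ih =>
    intro h
    obtain ⟨hi, h'⟩ := List.nodup_cons.mp h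
    rw [List.map_cons, List.prod_cons, ih h',
      single_mul_rho hU₁ (by simpa using hi), List.toFinset_cons]

end Aux

/-- **Causal factorization of unitary channels**: the CJ operator of a unitary channel
`U(·)U†` factorizes as the product `∏_i ρ_{C_i|Pa(C_i)}` of pairwise commuting CJ
operators of channels, where each factor is the CJ operator of a channel from the tensor
product of the parents `Pa(C_i) = {B_j | B_j influences C_i}` to `C_i`, padded with the
identity on all other tensor factors. -/
theorem unitary_channel_causal_factorization
    {B : Fin k → Type} {C : Fin l → Type}
    [∀ j, Fintype (B j)] [∀ j, DecidableEq (B j)]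
    [∀ i, Fintype (C i)] [∀ i, DecidableEq (C i)]
    (U : Matrix ((i : Fin l) → C i) ((j : Fin k) → B j) ℂ)
    (hU₁ : U * U.conjTranspose = 1) (hU₂ : U.conjTranspose * U = 1) :
    ∃ N : (i : Fin l) → Matrix (C i × ((j : Fin k) → B j)) (C i × ((j : Fin k) → B j)) ℂ,
      (∀ i, IsChannelCJPi (N i)) ∧
      (∀ i, PaddedOn (N i) {j | ¬ DoesNotInfluence U j i}) ∧
      (∀ i i', padFactor i (N i) * padFactor i' (N i') =
               padFactor i' (N i') * padFactor i (N i)) ∧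
      cjOf U = ((List.finRange l).map fun i => padFactor i (N i)).prod := by
  refine ⟨fun i => margOut U i, fun i => margOut_isChannel hU₂ i, ?_, ?_, ?_⟩
  · intro i j hj ci ci' b b' y
    have hdni : DoesNotInfluence U j i := not_not.mp (by simpa using hj)
    exact hdni ci ci' b b' y
  · intro i i'
    rw [padFactor_margOut, padFactor_margOut]
    by_cases h : i = i'
    · subst h; rfl
    · rw [single_mul_rho hU₁ (by simp [h]),
        single_mul_rho hU₁ (by simp [Ne.symm h]),
        Finset.pair_comm i i']
  · have hfun : (fun i => padFactor i (margOut U i)) = fun i => rho U {i} :=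
      funext (padFactor_margOut U)
    rw [hfun, rho_list_prod hU₁ hU₂ _ (List.nodup_finRange l),
      List.toFinset_finRange, rho_univ]
end
end

section
/- Let A and B be quantum nodes with input and output spaces of dimension d, let H_{P^out} = ⊕_{i∈I} H_{P_i^L} ⊗ H_{P_i^R} be an orthogonal direct sum decomposition, and suppose σ_{ABP} = Σ_{i∈I} ρ^i_{A|B P_i^L} ⊗ ρ^i_{B|P_i^R A} is a valid process operator over the nodes A, B and the root node P (with trivial input space), where for each i, ρ^i_{A|B P_i^L} is the CJ operator of a channel from H_{B^out} ⊗ H_{P_i^L} to H_{A^in}, ρ^i_{B|P_i^R A} is the CJ operator of a channel from H_{P_i^R} ⊗ H_{A^out} to H_{B^in}, and the i-th summand is supported on the i-th subspace of H*_{P^out}. Then for each i ∈ I, at most one of the following holds: ρ^i_{A|B P_i^L} is signalling from B^out to A^in, or ρ^i_{B|P_i^R A} is signalling from A^out to B^in. -/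
open Matrix BigOperators
open scoped ComplexOrder
noncomputable section

/-- `ρ` (an operator indexed by `Y × X`) is the CJ operator of a CPTP map from `X` to `Y`. -/
def IsChannelCJ {Y X : Type} [Fintype Y] [Fintype X] [DecidableEq X]
    (ρ : Matrix (Y × X) (Y × X) ℂ) : Prop :=
  ρ.PosSemidef ∧ ∀ x x' : X, ∑ y : Y, ρ (y, x) (y, x') = if x = x' then (1 : ℂ) else 0

/-- `τ` is the transposed CJ operator of a CPTP map from `I` to `O`. -/
def IsLocalTau {I O : Type} [Fintype I] [Fintype O] [DecidableEq I]
    (τ : Matrix (I × O) (I × O) ℂ) : Prop :=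
  ∃ ρ : Matrix (O × I) (O × I) ℂ, IsChannelCJ ρ ∧
    ∀ (p q : I × O), τ p q = ρ (q.2, q.1) (p.2, p.1)

/-- `σe` is a process operator over the three nodes `A`, `B` and a root node `P`
(trivial input space, output space `PO`); the trivial input space of `P` is suppressed,
and the local CPTP operations at `P` are the preparations of states on `PO`. -/
def IsProcess3 {Ai Ao Bi Bo PO : Type}
    [Fintype Ai] [Fintype Ao] [Fintype Bi] [Fintype Bo] [Fintype PO]
    [DecidableEq Ai] [DecidableEq Bi]
    (σe : Matrix ((Ai × Ao) × (Bi × Bo) × PO) ((Ai × Ao) × (Bi × Bo) × PO) ℂ) : Prop :=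
  σe.PosSemidef ∧
    ∀ (τA : Matrix (Ai × Ao) (Ai × Ao) ℂ) (τB : Matrix (Bi × Bo) (Bi × Bo) ℂ),
      IsLocalTau τA → IsLocalTau τB →
      ∀ sP : Matrix PO PO ℂ, sP.PosSemidef → sP.trace = 1 →
      (σe * Matrix.of fun (p q : (Ai × Ao) × (Bi × Bo) × PO) =>
          τA p.1 q.1 * τB p.2.1 q.2.1 * sP q.2.2 p.2.2).trace = 1

section
variable {Ai Ao Bi Bo : Type} {ι : Type} {PL PR : ι → Type}

/-- The operator `σ_{ABP} = Σ_{i∈I} ρ^i_{A|B P_i^L} ⊗ ρ^i_{B|P_i^R A}` on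
`H_{A^in} ⊗ H*_{A^out} ⊗ H_{B^in} ⊗ H*_{B^out} ⊗ H*_{P^out}`, where
`H_{P^out} = ⊕_{i∈I} H_{P_i^L} ⊗ H_{P_i^R}` (modelled by the sigma type
`Σ i, PL i × PR i`), with the `i`-th summand supported on the `i`-th subspace. -/
def sumProc [DecidableEq ι]
    (ρA : (i : ι) → Matrix (Ai × (Bo × PL i)) (Ai × (Bo × PL i)) ℂ)
    (ρB : (i : ι) → Matrix (Bi × (PR i × Ao)) (Bi × (PR i × Ao)) ℂ) :
    Matrix ((Ai × Ao) × (Bi × Bo) × (Σ i : ι, PL i × PR i))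
           ((Ai × Ao) × (Bi × Bo) × (Σ i : ι, PL i × PR i)) ℂ :=
  Matrix.of fun p q =>
    if h : p.2.2.1 = q.2.2.1 then
      ρA p.2.2.1 (p.1.1, (p.2.1.2, p.2.2.2.1))
        (q.1.1, (q.2.1.2, cast (congrArg PL h).symm q.2.2.2.1)) *
      ρB p.2.2.1 (p.2.1.1, (p.2.2.2.2, p.1.2))
        (q.2.1.1, (cast (congrArg PR h).symm q.2.2.2.2, q.1.2))
    else 0

/-- The channel with CJ operator `ρ` (from `H_{B^out} ⊗ H_{P_i^L}` to `H_{A^in}`) is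
signalling from `B^out` to `A^in`, i.e. it is *not* of the form
`(1/d_{B^out}) Tr_{(B^out)*}[ρ] ⊗ 1_{(B^out)*}` on the `B^out` factor. -/
def SignallingBtoA [Fintype Bo] [DecidableEq Bo] {X : Type}
    (ρ : Matrix (Ai × (Bo × X)) (Ai × (Bo × X)) ℂ) : Prop :=
  ¬ ∀ (a a' : Ai) (b b' : Bo) (x x' : X),
      ρ (a, (b, x)) (a', (b', x')) =
        (if b = b' then 1 else 0) * (1 / (Fintype.card Bo : ℂ)) *
          ∑ c : Bo, ρ (a, (c, x)) (a', (c, x'))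

/-- The channel with CJ operator `ρ` (from `H_{P_i^R} ⊗ H_{A^out}` to `H_{B^in}`) is
signalling from `A^out` to `B^in`. -/
def SignallingAtoB [Fintype Ao] [DecidableEq Ao] {X : Type}
    (ρ : Matrix (Bi × (X × Ao)) (Bi × (X × Ao)) ℂ) : Prop :=
  ¬ ∀ (b b' : Bi) (a a' : Ao) (x x' : X),
      ρ (b, (x, a)) (b', (x', a')) =
        (if a = a' then 1 else 0) * (1 / (Fintype.card Ao : ℂ)) *
          ∑ c : Ao, ρ (b, (x, c)) (b', (x', c))

end

/-!
Fix a block `i`. Let `A` measure `{P, 1 - P}` and prepare `φ` or `ψ` according to the outcome,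
let `B` measure `{Q, 1 - Q}` and prepare `χ` or `ξ`, and let the root node prepare `sL ⊗ sR` in
the `i`-th summand of `H_{P^out}`. Only the `i`-th term of `σ_{ABP}` contributes, and the
normalisation of the process reads `N(φ, χ) = 1`, where
`N(φ, χ) = p_A(P | χ) p_B(Q | φ) + p_A(P | ξ) p_B(1 - Q | φ)`
`  + p_A(1 - P | χ) p_B(Q | ψ) + p_A(1 - P | ξ) p_B(1 - Q | ψ)`
with `p_A(E | χ) = Tr[E 𝓔_A(χ ⊗ sL)]` and `p_B(E | φ) = Tr[E 𝓔_B(sR ⊗ φ)]`. Hence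
`0 = N(φ, χ) - N(ψ, χ) - N(φ, ξ) + N(ψ, ξ) = (p_A(P | χ) - p_A(P | ξ)) (p_B(Q | φ) - p_B(Q | ψ))`.
If `ρ^i_{A|B P_i^L}` signals, the first factor is nonzero for some states and effect: otherwise
`p_A(E | Y ⊗ s)` would depend on `Y` only through `Tr Y` for states `Y`, hence, as states and
effects each span all matrices, for all `E`, `Y`, `s`, which is the non-signalling condition.
Likewise for the second factor.
-/

open scoped Kronecker

namespace Matrix

variable {X Y : Type*} [Fintype X] [Fintype Y]

theorem trace_mul_eq_trace_submatrix_mul_submatrix {R : Type*} [NonUnitalNonAssocSemiring R]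
    (M N : Matrix X X R) {f : Y → X} (hf : Function.Injective f)
    (hN : ∀ x y, N x y ≠ 0 → x ∈ Set.range f ∧ y ∈ Set.range f) :
    (M * N).trace = (M.submatrix f f * N.submatrix f f).trace := by
  simp only [trace, diag, mul_apply, submatrix_apply]
  refine (Fintype.sum_of_injective f hf _ _ (fun x hx => ?_) fun a => ?_).symm
  · refine Finset.sum_eq_zero fun y _ => ?_
    by_contra h
    exact hx (hN y x (right_ne_zero_of_mul h)).2
  · refine Fintype.sum_of_injective f hf _ _ (fun y hy => ?_) fun _ => rfl
    by_contra h
    exact hy (hN y (f a) (right_ne_zero_of_mul h)).1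

section ExtendByZero

variable [DecidableEq X] {R : Type*} {f : Y → X}

variable (f) in
/-- `K` transported along `f`, and zero outside `range f × range f`. -/
def extendByZero [Semiring R] [StarRing R] (K : Matrix Y Y R) : Matrix X X R :=
  ((1 : Matrix X X R).submatrix f id)ᴴ * K * (1 : Matrix X X R).submatrix f id

omit [Fintype X] in
theorem extendByZero_apply [Semiring R] [StarRing R] (K : Matrix Y Y R) (x x' : X) :
    extendByZero f K x x' = ∑ y, ∑ y', if f y = x ∧ f y' = x' then K y y' else 0 := by
  simp only [extendByZero, mul_apply, conjTranspose_apply, submatrix_apply, one_apply, id,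
    Finset.sum_mul]
  rw [Finset.sum_comm]
  refine Finset.sum_congr rfl fun y _ => Finset.sum_congr rfl fun y' _ => ?_
  split_ifs <;> simp_all

omit [Fintype X] in
theorem extendByZero_apply_apply [Semiring R] [StarRing R] (hf : Function.Injective f)
    (K : Matrix Y Y R) (a b : Y) : extendByZero f K (f a) (f b) = K a b := by
  classical
  simp [extendByZero_apply, hf.eq_iff, ite_and]

omit [Fintype X] in
theorem mem_range_of_extendByZero_ne_zero [Semiring R] [StarRing R] {K : Matrix Y Y R}
    {x x' : X} (h : extendByZero f K x x' ≠ 0) : x ∈ Set.range f ∧ x' ∈ Set.range f := by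
  contrapose! h
  rw [extendByZero_apply]
  refine Finset.sum_eq_zero fun y _ => Finset.sum_eq_zero fun y' _ => if_neg ?_
  grind

theorem PosSemidef.extendByZero [Ring R] [PartialOrder R] [StarRing R] {K : Matrix Y Y R}
    (hK : K.PosSemidef) : (extendByZero f K).PosSemidef :=
  hK.conjTranspose_mul_mul_same _

theorem trace_extendByZero [CommSemiring R] [StarRing R] (hf : Function.Injective f)
    (K : Matrix Y Y R) : (extendByZero f K).trace = K.trace := by
  classical
  rw [extendByZero, Matrix.mul_assoc, trace_mul_comm, Matrix.mul_assoc]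
  convert congrArg trace (Matrix.mul_one K)
  ext y y'
  simp [mul_apply, hf.eq_iff, one_apply]

end ExtendByZero

theorem _root_.IsStarProjection.posSemidef {n R : Type*} [Fintype n] [Ring R] [PartialOrder R]
    [StarRing R] [StarOrderedRing R] {P : Matrix n n R} (hP : IsStarProjection P) :
    P.PosSemidef := by
  have h : Pᴴ * P = P := by
    rw [← star_eq_conjTranspose, hP.isSelfAdjoint.star_eq, hP.isIdempotentElem.eq]
  exact h ▸ posSemidef_conjTranspose_mul_self P

variable {n : Type*} [Fintype n]

def IsDensityMatrix (ρ : Matrix n n ℂ) : Prop :=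
  ρ.PosSemidef ∧ ρ.trace = 1

def IsEffect [DecidableEq n] (E : Matrix n n ℂ) : Prop :=
  E.PosSemidef ∧ (1 - E).PosSemidef

theorem _root_.IsStarProjection.isEffect [DecidableEq n] {P : Matrix n n ℂ}
    (hP : IsStarProjection P) : IsEffect P :=
  ⟨hP.posSemidef, hP.one_sub.posSemidef⟩

def lineProjection (v : n → ℂ) : Matrix n n ℂ :=
  (star v ⬝ᵥ v)⁻¹ • vecMulVec v (star v)

theorem posSemidef_lineProjection (v : n → ℂ) : (lineProjection v).PosSemidef :=
  (posSemidef_vecMulVec_self_star v).smul (inv_nonneg_of_nonneg (dotProduct_star_self_nonneg v))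

theorem isStarProjection_lineProjection {v : n → ℂ} (hv : v ≠ 0) :
    IsStarProjection (lineProjection v) := by
  refine ⟨?_, (posSemidef_lineProjection v).isHermitian⟩
  have : star v ⬝ᵥ v ≠ 0 := by simpa using hv
  rw [IsIdempotentElem, lineProjection, smul_mul_smul, vecMulVec_mul_vecMulVec, vecMulVec_smul,
    smul_smul, mul_assoc, inv_mul_cancel₀ this, mul_one]

theorem isDensityMatrix_lineProjection {v : n → ℂ} (hv : v ≠ 0) :
    IsDensityMatrix (lineProjection v) := by
  have : star v ⬝ᵥ v ≠ 0 := by simpa using hv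
  refine ⟨posSemidef_lineProjection v, ?_⟩
  rw [lineProjection, trace_smul, trace_vecMulVec, dotProduct_comm v, smul_eq_mul,
    inv_mul_cancel₀ this]

theorem vecMulVec_star_mem_span (x y : n → ℂ) :
    vecMulVec x (star y) ∈ Submodule.span ℂ (Set.range fun v : n → ℂ => vecMulVec v (star v)) := by
  have polarization : vecMulVec x (star y) = (4 : ℂ)⁻¹ •
      (vecMulVec (x + y) (star (x + y)) - vecMulVec (x - y) (star (x - y)) +
        Complex.I • vecMulVec (x + Complex.I • y) (star (x + Complex.I • y)) -
        Complex.I • vecMulVec (x - Complex.I • y) (star (x - Complex.I • y))) := by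
    ext a b
    simp only [vecMulVec_apply, smul_apply, add_apply, sub_apply, Pi.add_apply, Pi.sub_apply,
      Pi.star_apply, Pi.smul_apply, star_add, star_sub, star_smul, smul_eq_mul,
      RCLike.star_def, Complex.conj_I]
    ring_nf
    rw [Complex.I_sq]
    ring
  rw [polarization]
  refine Submodule.smul_mem _ _ (Submodule.sub_mem _ (Submodule.add_mem _
    (Submodule.sub_mem _ ?_ ?_) (Submodule.smul_mem _ _ ?_)) (Submodule.smul_mem _ _ ?_)) <;>
  exact Submodule.subset_span ⟨_, rfl⟩

theorem span_eq_top_of_lineProjection_mem {S : Set (Matrix n n ℂ)}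
    (hS : ∀ v : n → ℂ, v ≠ 0 → lineProjection v ∈ S) : Submodule.span ℂ S = ⊤ := by
  classical
  suffices hrange : ∀ v : n → ℂ, vecMulVec v (star v) ∈ Submodule.span ℂ S by
    refine Submodule.eq_top_iff'.2 fun M => ?_
    rw [matrix_eq_sum_single M]
    refine Submodule.sum_mem _ fun p _ => Submodule.sum_mem _ fun q _ => ?_
    rw [show single p q (M p q) = M p q • single p q 1 by simp [smul_single]]
    refine Submodule.smul_mem _ _ ?_
    have := Submodule.span_le.2 (Set.range_subset_iff.2 hrange) <|
      vecMulVec_star_mem_span (Pi.single p 1) (Pi.single q 1)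
    simpa [single_eq_single_vecMulVec_single] using this
  intro v
  by_cases hv : v = 0
  · simp [hv]
  have : star v ⬝ᵥ v ≠ 0 := by simpa using hv
  have h := Submodule.smul_mem _ (star v ⬝ᵥ v) (Submodule.subset_span (hS v hv))
  rwa [lineProjection, smul_smul, mul_inv_cancel₀ this, one_smul] at h

theorem span_isDensityMatrix_eq_top :
    Submodule.span ℂ {ρ : Matrix n n ℂ | ρ.IsDensityMatrix} = ⊤ :=
  span_eq_top_of_lineProjection_mem fun _ hv => isDensityMatrix_lineProjection hv

theorem span_isEffect_eq_top [DecidableEq n] :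
    Submodule.span ℂ {E : Matrix n n ℂ | E.IsEffect} = ⊤ :=
  span_eq_top_of_lineProjection_mem fun _ hv => (isStarProjection_lineProjection hv).isEffect

theorem IsDensityMatrix.kronecker {m : Type*} [Fintype m] {ρ : Matrix n n ℂ} {ρ' : Matrix m m ℂ}
    (hρ : ρ.IsDensityMatrix) (hρ' : ρ'.IsDensityMatrix) : (ρ ⊗ₖ ρ').IsDensityMatrix :=
  ⟨hρ.1.kronecker hρ'.1, by rw [trace_kronecker, hρ.2, hρ'.2, one_mul]⟩

theorem IsDensityMatrix.extendByZero {m : Type*} [Fintype m] [DecidableEq m] {f : n → m}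
    (hf : Function.Injective f) {ρ : Matrix n n ℂ} (hρ : ρ.IsDensityMatrix) :
    (extendByZero f ρ).IsDensityMatrix :=
  ⟨hρ.1.extendByZero, by rw [trace_extendByZero hf, hρ.2]⟩

theorem isDensityMatrix_smul_one [DecidableEq n] [Nonempty n] :
    ((Fintype.card n : ℂ)⁻¹ • (1 : Matrix n n ℂ)).IsDensityMatrix := by
  refine ⟨PosSemidef.one.smul (inv_nonneg_of_nonneg (Nat.cast_nonneg _)), ?_⟩
  rw [trace_smul, trace_one, smul_eq_mul, inv_mul_cancel₀ (by simp)]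

theorem eq_trace_mul_of_forall_isDensityMatrix {g : Matrix n n ℂ →ₗ[ℂ] ℂ} {ω : Matrix n n ℂ}
    (h : ∀ χ : Matrix n n ℂ, χ.IsDensityMatrix → g χ = g ω) (Y : Matrix n n ℂ) :
    g Y = Y.trace * g ω := by
  have : g = g ω • traceLinearMap n ℂ ℂ :=
    LinearMap.ext_on span_isDensityMatrix_eq_top fun χ hχ => by
      simp [h χ hχ, show χ.trace = 1 from hχ.2]
  simpa [mul_comm] using LinearMap.congr_fun this Y

end Matrix

section CJ

variable {O I : Type} [Fintype O] [Fintype I]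

/-- `cjProb ρ E ω = Tr[E 𝓔(ω)]`, where `𝓔` is the map with CJ operator `ρ`. -/
def cjProb (ρ : Matrix (O × I) (O × I) ℂ) : Matrix O O ℂ →ₗ[ℂ] Matrix I I ℂ →ₗ[ℂ] ℂ :=
  LinearMap.mk₂ ℂ (fun E ω => (ρ * (E ⊗ₖ ωᵀ)).trace)
    (fun _ _ _ => by simp [add_kronecker, Matrix.mul_add])
    (fun _ _ _ => by simp [smul_kronecker])
    (fun _ _ _ => by simp [kronecker_add, Matrix.mul_add])
    (fun _ _ _ => by simp [kronecker_smul])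

theorem cjProb_apply (ρ : Matrix (O × I) (O × I) ℂ) (E : Matrix O O ℂ) (ω : Matrix I I ℂ) :
    cjProb ρ E ω = (ρ * (E ⊗ₖ ωᵀ)).trace :=
  rfl

theorem cjProb_submatrix_swap {J : Type} [Fintype J] (ρ : Matrix (O × (I × J)) (O × (I × J)) ℂ)
    (E : Matrix O O ℂ) (S : Matrix J J ℂ) (T : Matrix I I ℂ) :
    cjProb (ρ.submatrix (Prod.map id Prod.swap) (Prod.map id Prod.swap)) E (S ⊗ₖ T) =
      cjProb ρ E (T ⊗ₖ S) := by
  have hbij : Function.Bijective (Prod.map id Prod.swap : O × (J × I) → O × (I × J)) :=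
    Function.bijective_id.prodMap Prod.swap_bijective
  rw [cjProb_apply, cjProb_apply, trace_mul_eq_trace_submatrix_mul_submatrix ρ _ hbij.1
    fun x y _ => ⟨hbij.2 x, hbij.2 y⟩]
  congr 2
  ext ⟨o, j, i⟩ ⟨o', j', i'⟩
  simp [mul_comm]

/-- CJ operator of the measure-and-prepare channel `ω ↦ Tr[P ω] φ + Tr[(1 - P) ω] ψ`. -/
def measurePrepare [DecidableEq I] (P : Matrix I I ℂ) (φ ψ : Matrix O O ℂ) :
    Matrix (O × I) (O × I) ℂ :=
  φ ⊗ₖ Pᵀ + ψ ⊗ₖ (1 - P)ᵀ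

theorem isChannelCJ_measurePrepare [DecidableEq I] {P : Matrix I I ℂ} {φ ψ : Matrix O O ℂ}
    (hP : P.IsEffect) (hφ : φ.IsDensityMatrix) (hψ : ψ.IsDensityMatrix) :
    IsChannelCJ (measurePrepare P φ ψ) := by
  refine ⟨(hφ.1.kronecker hP.1.transpose).add (hψ.1.kronecker hP.2.transpose), fun x x' => ?_⟩
  have : ∑ y, measurePrepare P φ ψ (y, x) (y, x') = φ.trace * P x' x + ψ.trace * (1 - P) x' x := by
    simp only [measurePrepare, Matrix.add_apply, kronecker_apply, transpose_apply,
      Finset.sum_add_distrib, ← Finset.sum_mul, trace, diag]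
  rw [this, hφ.2, hψ.2, one_mul, one_mul, Matrix.sub_apply, add_sub_cancel, one_apply]
  exact if_congr eq_comm rfl rfl

end CJ

section Signalling

variable {Ai Ao Bi Bo X : Type} [Fintype Ai] [Fintype Ao] [Fintype Bi] [Fintype Bo] [Fintype X]

theorem cjProb_single_kronecker_single [DecidableEq Ai] [DecidableEq X]
    (ρ : Matrix (Ai × (Bo × X)) (Ai × (Bo × X)) ℂ) (a a' : Ai) (Y : Matrix Bo Bo ℂ) (x x' : X) :
    cjProb ρ (single a' a 1) (Y ⊗ₖ single x x' 1) =
      ∑ c, ∑ c', ρ (a, (c, x)) (a', (c', x')) * Y c c' := by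
  simp [cjProb_apply, trace, mul_apply, Fintype.sum_prod_type, single_apply, ite_and]

theorem exists_cjProb_ne_of_signallingBtoA [DecidableEq Ai] [DecidableEq Bo]
    {ρ : Matrix (Ai × (Bo × X)) (Ai × (Bo × X)) ℂ} (h : SignallingBtoA ρ) :
    ∃ (E : Matrix Ai Ai ℂ) (s : Matrix X X ℂ) (χ ξ : Matrix Bo Bo ℂ), E.IsEffect ∧
      s.IsDensityMatrix ∧ χ.IsDensityMatrix ∧ ξ.IsDensityMatrix ∧
      cjProb ρ E (χ ⊗ₖ s) ≠ cjProb ρ E (ξ ⊗ₖ s) := by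
  classical
  by_contra! hconst
  refine h fun a a' b b' x x' => ?_
  have : Nonempty Bo := ⟨b⟩
  set ω : Matrix Bo Bo ℂ := (Fintype.card Bo : ℂ)⁻¹ • 1
  have hω : ω.IsDensityMatrix := isDensityMatrix_smul_one
  have hstates (E : Matrix Ai Ai ℂ) (s : Matrix X X ℂ) (hE : E.IsEffect)
      (hs : s.IsDensityMatrix) (Y : Matrix Bo Bo ℂ) :
      cjProb ρ E (Y ⊗ₖ s) = Y.trace * cjProb ρ E (ω ⊗ₖ s) :=
    eq_trace_mul_of_forall_isDensityMatrix (g := (cjProb ρ E).comp (kroneckerBilinear.flip s))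
      (fun χ hχ => hconst E s χ ω hE hs hχ hω) Y
  have hall (E : Matrix Ai Ai ℂ) (s : Matrix X X ℂ) (Y : Matrix Bo Bo ℂ) :
      cjProb ρ E (Y ⊗ₖ s) = Y.trace * cjProb ρ E (ω ⊗ₖ s) := by
    have := LinearMap.ext_on span_isEffect_eq_top
      (f := (cjProb ρ).compl₂ (kroneckerBilinear Y))
      (g := Y.trace • (cjProb ρ).compl₂ (kroneckerBilinear ω)) fun E hE =>
        LinearMap.ext_on span_isDensityMatrix_eq_top fun s hs => hstates E s hE hs Y
    exact LinearMap.congr_fun₂ this E s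
  have := hall (single a' a 1) (single x x' 1) (single b b' 1)
  rw [cjProb_single_kronecker_single, cjProb_single_kronecker_single] at this
  simp [ω, single_apply, ite_and, one_apply, trace] at this
  rw [this, ← Finset.sum_mul]
  by_cases hb : b = b'
  · simp [hb, mul_comm]
  · simp [hb, Ne.symm hb]

theorem exists_cjProb_ne_of_signallingAtoB [DecidableEq Bi] [DecidableEq Ao]
    {ρ : Matrix (Bi × (X × Ao)) (Bi × (X × Ao)) ℂ} (h : SignallingAtoB ρ) :
    ∃ (E : Matrix Bi Bi ℂ) (s : Matrix X X ℂ) (φ ψ : Matrix Ao Ao ℂ), E.IsEffect ∧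
      s.IsDensityMatrix ∧ φ.IsDensityMatrix ∧ ψ.IsDensityMatrix ∧
      cjProb ρ E (s ⊗ₖ φ) ≠ cjProb ρ E (s ⊗ₖ ψ) := by
  -- `SignallingAtoB ρ` is by definition `SignallingBtoA` of `ρ` with its two inputs swapped.
  obtain ⟨E, s, φ, ψ, hE, hs, hφ, hψ, hne⟩ := exists_cjProb_ne_of_signallingBtoA
    (ρ := ρ.submatrix (Prod.map id Prod.swap) (Prod.map id Prod.swap)) h
  exact ⟨E, s, φ, ψ, hE, hs, hφ, hψ, by rwa [cjProb_submatrix_swap, cjProb_submatrix_swap] at hne⟩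

end Signalling

section ProcessValue

variable {Ai Ao Bi Bo PO : Type} [Fintype Ai] [Fintype Ao] [Fintype Bi] [Fintype Bo] [Fintype PO]

/-- The left-hand side of the normalisation condition in `IsProcess3`, in terms of the CJ
operators `MA`, `MB` of the local channels rather than their transposes `τA`, `τB`. -/
def processValue (σ : Matrix ((Ai × Ao) × (Bi × Bo) × PO) ((Ai × Ao) × (Bi × Bo) × PO) ℂ)
    (MA : Matrix (Ao × Ai) (Ao × Ai) ℂ) (MB : Matrix (Bo × Bi) (Bo × Bi) ℂ)
    (sP : Matrix PO PO ℂ) : ℂ :=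
  (σ * of fun p q : (Ai × Ao) × (Bi × Bo) × PO =>
    MA (q.1.2, q.1.1) (p.1.2, p.1.1) * MB (q.2.1.2, q.2.1.1) (p.2.1.2, p.2.1.1) *
      sP q.2.2 p.2.2).trace

theorem IsProcess3.processValue_eq_one [DecidableEq Ai] [DecidableEq Bi]
    {σ : Matrix ((Ai × Ao) × (Bi × Bo) × PO) ((Ai × Ao) × (Bi × Bo) × PO) ℂ} (hσ : IsProcess3 σ)
    {MA : Matrix (Ao × Ai) (Ao × Ai) ℂ} {MB : Matrix (Bo × Bi) (Bo × Bi) ℂ} {sP : Matrix PO PO ℂ}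
    (hA : IsChannelCJ MA) (hB : IsChannelCJ MB) (hP : sP.IsDensityMatrix) :
    processValue σ MA MB sP = 1 :=
  hσ.2 _ _ ⟨MA, hA, fun _ _ => rfl⟩ ⟨MB, hB, fun _ _ => rfl⟩ sP hP.1 hP.2

variable (σ : Matrix ((Ai × Ao) × (Bi × Bo) × PO) ((Ai × Ao) × (Bi × Bo) × PO) ℂ)
  (MA MA' : Matrix (Ao × Ai) (Ao × Ai) ℂ) (MB MB' : Matrix (Bo × Bi) (Bo × Bi) ℂ)
  (sP : Matrix PO PO ℂ)

theorem processValue_add_left :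
    processValue σ (MA + MA') MB sP = processValue σ MA MB sP + processValue σ MA' MB sP := by
  rw [processValue, processValue, processValue, ← trace_add, ← Matrix.mul_add]
  congr 2
  ext p q
  simp [add_mul]

theorem processValue_add_right :
    processValue σ MA (MB + MB') sP = processValue σ MA MB sP + processValue σ MA MB' sP := by
  rw [processValue, processValue, processValue, ← trace_add, ← Matrix.mul_add]
  congr 2
  ext p q
  simp [add_mul, mul_add]

end ProcessValue

section DirectSum

variable {Ai Ao Bi Bo ι : Type} {PL PR : ι → Type}

def blockIndex (i : ι) :
    (Ai × (Bo × PL i)) × (Bi × (PR i × Ao)) → (Ai × Ao) × (Bi × Bo) × (Σ j, PL j × PR j) :=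
  fun ((a, bo, l), (b, r, ao)) => ((a, ao), (b, bo), ⟨i, (l, r)⟩)

theorem blockIndex_injective (i : ι) :
    Function.Injective
      (blockIndex i : (Ai × (Bo × PL i)) × (Bi × (PR i × Ao)) → (Ai × Ao) × (Bi × Bo) × _) := by
  rintro ⟨⟨a, bo, l⟩, b, r, ao⟩ ⟨⟨a', bo', l'⟩, b', r', ao'⟩ h
  simp_all [blockIndex]

theorem mem_range_blockIndex {i : ι} {x : (Ai × Ao) × (Bi × Bo) × (Σ j, PL j × PR j)}
    (hx : x.2.2 ∈ Set.range (Sigma.mk i)) : x ∈ Set.range (blockIndex i) := by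
  obtain ⟨⟨a, ao⟩, ⟨b, bo⟩, _⟩ := x
  obtain ⟨⟨l, r⟩, rfl⟩ := hx
  exact ⟨((a, bo, l), (b, r, ao)), rfl⟩

variable [DecidableEq ι] (ρA : (i : ι) → Matrix (Ai × (Bo × PL i)) (Ai × (Bo × PL i)) ℂ)
  (ρB : (i : ι) → Matrix (Bi × (PR i × Ao)) (Bi × (PR i × Ao)) ℂ)

theorem sumProc_submatrix_blockIndex (i : ι) :
    (sumProc ρA ρB).submatrix (blockIndex i) (blockIndex i) = ρA i ⊗ₖ ρB i := by
  ext ⟨⟨a, bo, l⟩, b, r, ao⟩ ⟨⟨a', bo', l'⟩, b', r', ao'⟩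
  simp [sumProc, blockIndex]

variable [Fintype Ai] [Fintype Ao] [Fintype Bi] [Fintype Bo] [Fintype ι]
  [∀ i, Fintype (PL i)] [∀ i, Fintype (PR i)] [∀ i, DecidableEq (PL i)] [∀ i, DecidableEq (PR i)]

theorem processValue_sumProc_kronecker (i : ι) (W : Matrix Ai Ai ℂ) (Z : Matrix Ao Ao ℂ)
    (V : Matrix Bi Bi ℂ) (Y : Matrix Bo Bo ℂ) (sL : Matrix (PL i) (PL i) ℂ)
    (sR : Matrix (PR i) (PR i) ℂ) :
    processValue (sumProc ρA ρB) (Z ⊗ₖ Wᵀ) (Y ⊗ₖ Vᵀ) (extendByZero (Sigma.mk i) (sL ⊗ₖ sR)) =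
      cjProb (ρA i) W (Y ⊗ₖ sL) * cjProb (ρB i) V (sR ⊗ₖ Z) := by
  rw [processValue, trace_mul_eq_trace_submatrix_mul_submatrix _ _ (blockIndex_injective i)
    fun x y h => ?_, sumProc_submatrix_blockIndex]
  · trans ((ρA i ⊗ₖ ρB i) * ((W ⊗ₖ (Y ⊗ₖ sL)ᵀ) ⊗ₖ (V ⊗ₖ (sR ⊗ₖ Z)ᵀ))).trace
    · congr 2
      ext ⟨⟨a, bo, l⟩, b, r, ao⟩ ⟨⟨a', bo', l'⟩, b', r', ao'⟩
      simp only [blockIndex, submatrix_apply, of_apply, kronecker_apply, transpose_apply]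
      rw [extendByZero_apply_apply (f := Sigma.mk (β := fun j => PL j × PR j) i)
        sigma_mk_injective, kronecker_apply]
      ring
    · rw [← mul_kronecker_mul, trace_kronecker]
      rfl
  · have := mem_range_of_extendByZero_ne_zero (right_ne_zero_of_mul h)
    exact ⟨mem_range_blockIndex this.2, mem_range_blockIndex this.1⟩

variable [DecidableEq Ai] [DecidableEq Bi]

theorem processValue_sumProc_measurePrepare (i : ι) (P : Matrix Ai Ai ℂ) (φ ψ : Matrix Ao Ao ℂ)
    (Q : Matrix Bi Bi ℂ) (χ ξ : Matrix Bo Bo ℂ) (sL : Matrix (PL i) (PL i) ℂ)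
    (sR : Matrix (PR i) (PR i) ℂ) :
    processValue (sumProc ρA ρB) (measurePrepare P φ ψ) (measurePrepare Q χ ξ)
        (extendByZero (Sigma.mk i) (sL ⊗ₖ sR)) =
      cjProb (ρA i) P (χ ⊗ₖ sL) * cjProb (ρB i) Q (sR ⊗ₖ φ) +
        cjProb (ρA i) P (ξ ⊗ₖ sL) * cjProb (ρB i) (1 - Q) (sR ⊗ₖ φ) +
        cjProb (ρA i) (1 - P) (χ ⊗ₖ sL) * cjProb (ρB i) Q (sR ⊗ₖ ψ) +
        cjProb (ρA i) (1 - P) (ξ ⊗ₖ sL) * cjProb (ρB i) (1 - Q) (sR ⊗ₖ ψ) := by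
  simp only [measurePrepare, processValue_add_left, processValue_add_right,
    processValue_sumProc_kronecker]
  ring

theorem cjProb_sub_mul_cjProb_sub_eq_zero (hproc : IsProcess3 (sumProc ρA ρB)) (i : ι)
    {P : Matrix Ai Ai ℂ} {Q : Matrix Bi Bi ℂ} {φ ψ : Matrix Ao Ao ℂ} {χ ξ : Matrix Bo Bo ℂ}
    {sL : Matrix (PL i) (PL i) ℂ} {sR : Matrix (PR i) (PR i) ℂ} (hP : P.IsEffect)
    (hQ : Q.IsEffect) (hφ : φ.IsDensityMatrix) (hψ : ψ.IsDensityMatrix)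
    (hχ : χ.IsDensityMatrix) (hξ : ξ.IsDensityMatrix) (hsL : sL.IsDensityMatrix)
    (hsR : sR.IsDensityMatrix) :
    (cjProb (ρA i) P (χ ⊗ₖ sL) - cjProb (ρA i) P (ξ ⊗ₖ sL)) *
      (cjProb (ρB i) Q (sR ⊗ₖ φ) - cjProb (ρB i) Q (sR ⊗ₖ ψ)) = 0 := by
  have hs := (hsL.kronecker hsR).extendByZero
    (f := Sigma.mk (β := fun j => PL j × PR j) i) sigma_mk_injective
  have normalised {φ' ψ' : Matrix Ao Ao ℂ} {χ' ξ' : Matrix Bo Bo ℂ} (hφ' : φ'.IsDensityMatrix)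
      (hψ' : ψ'.IsDensityMatrix) (hχ' : χ'.IsDensityMatrix) (hξ' : ξ'.IsDensityMatrix) :=
    processValue_sumProc_measurePrepare ρA ρB i P φ' ψ' Q χ' ξ' sL sR ▸
      hproc.processValue_eq_one (isChannelCJ_measurePrepare hP hφ' hψ')
        (isChannelCJ_measurePrepare hQ hχ' hξ') hs
  linear_combination normalised hφ hψ hχ hξ - normalised hψ hψ hχ hξ -
    normalised hφ hψ hξ hξ + normalised hψ hψ hξ hξ

end DirectSum

theorem direct_sum_blocks_signal_at_most_one_way_general
    {Ai Ao Bi Bo : Type}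
    [Fintype Ai] [Fintype Ao] [Fintype Bi] [Fintype Bo]
    [DecidableEq Ai] [DecidableEq Ao] [DecidableEq Bi] [DecidableEq Bo]
    {ι : Type} [Fintype ι] [DecidableEq ι]
    {PL PR : ι → Type} [∀ i, Fintype (PL i)] [∀ i, Fintype (PR i)]
    (ρA : (i : ι) → Matrix (Ai × (Bo × PL i)) (Ai × (Bo × PL i)) ℂ)
    (ρB : (i : ι) → Matrix (Bi × (PR i × Ao)) (Bi × (PR i × Ao)) ℂ)
    (hproc : IsProcess3 (sumProc ρA ρB)) :
    ∀ i : ι, ¬ (SignallingBtoA (ρA i) ∧ SignallingAtoB (ρB i)) := by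
  classical
  rintro i ⟨hA, hB⟩
  obtain ⟨P, sL, χ, ξ, hP, hsL, hχ, hξ, hA⟩ := exists_cjProb_ne_of_signallingBtoA hA
  obtain ⟨Q, sR, φ, ψ, hQ, hsR, hφ, hψ, hB⟩ := exists_cjProb_ne_of_signallingAtoB hB
  exact mul_ne_zero (sub_ne_zero.2 hA) (sub_ne_zero.2 hB)
    (cjProb_sub_mul_cjProb_sub_eq_zero ρA ρB hproc i hP hQ hφ hψ hχ hξ hsL hsR)

/-- **In a bipartite process with a root node `P` carrying a direct-sum structure, each
block signals in at most one direction**: if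
`σ_{ABP} = Σ_{i∈I} ρ^i_{A|B P_i^L} ⊗ ρ^i_{B|P_i^R A}` is a valid process operator over
the nodes `A`, `B` and the root node `P` (with
`H_{P^out} = ⊕_{i∈I} H_{P_i^L} ⊗ H_{P_i^R}`), where each `ρ^i_{A|B P_i^L}` is the CJ
operator of a channel from `H_{B^out} ⊗ H_{P_i^L}` to `H_{A^in}` and each
`ρ^i_{B|P_i^R A}` the CJ operator of a channel from `H_{P_i^R} ⊗ H_{A^out}` to
`H_{B^in}`, then for each `i ∈ I`, at most one of the two channels is signalling
(from `B^out` to `A^in`, respectively from `A^out` to `B^in`). -/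
theorem direct_sum_blocks_signal_at_most_one_way
    {Ai Ao Bi Bo : Type} (d : ℕ)
    [Fintype Ai] [Fintype Ao] [Fintype Bi] [Fintype Bo]
    [DecidableEq Ai] [DecidableEq Ao] [DecidableEq Bi] [DecidableEq Bo]
    (hdA : Fintype.card Ai = d) (hdA' : Fintype.card Ao = d)
    (hdB : Fintype.card Bi = d) (hdB' : Fintype.card Bo = d)
    {ι : Type} [Fintype ι] [DecidableEq ι]
    {PL PR : ι → Type} [∀ i, Fintype (PL i)] [∀ i, Fintype (PR i)]
    [∀ i, DecidableEq (PL i)] [∀ i, DecidableEq (PR i)]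
    (ρA : (i : ι) → Matrix (Ai × (Bo × PL i)) (Ai × (Bo × PL i)) ℂ)
    (ρB : (i : ι) → Matrix (Bi × (PR i × Ao)) (Bi × (PR i × Ao)) ℂ)
    (hρA : ∀ i, IsChannelCJ (ρA i)) (hρB : ∀ i, IsChannelCJ (ρB i))
    (hproc : IsProcess3 (sumProc ρA ρB)) :
    ∀ i : ι, ¬ (SignallingBtoA (ρA i) ∧ SignallingAtoB (ρB i)) :=
  direct_sum_blocks_signal_at_most_one_way_general ρA ρB hproc
end
end

section
/- Compatibility implies Markovianity (classical): if a classical process κ over split nodes X_1,…,X_n is compatible with a directed graph G on vertices X_1,…,X_n, then κ is Markov for G, i.e., κ(X_1^in, X_1^out, …, X_n^in, X_n^out) = ∏_{i=1}^n P(X_i^in | Pa(X_i)^out) for some classical channels P(X_i^in | Pa(X_i)^out), where Pa(X_i) denotes the parents of X_i in G. -/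
open BigOperators

/-- The joint index of the split nodes: an assignment of a value to each input and each
output variable. -/
abbrev NIdx {n : ℕ} (In Out : Fin n → Type) := (i : Fin n) → In i × Out i

/-- `κ` is a classical process over the split nodes `X_1, …, X_n`. -/
def IsClassicalProcess {n : ℕ} (In Out : Fin n → Type)
    [∀ i, Fintype (In i)] [∀ i, Fintype (Out i)]
    (κ : NIdx In Out → ℝ) : Prop :=
  (∀ p, 0 ≤ κ p ∧ κ p ≤ 1) ∧
    ∀ Q : (i : Fin n) → In i → Out i → ℝ, (∀ i, IsClassicalChannel (Q i)) →
      ∑ p : NIdx In Out, κ p * ∏ i, Q i (p i).1 (p i).2 = 1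

/-- `κe` is a classical process over the `2n+1` split nodes `X_1, …, X_n`, root nodes
`λ_1, …, λ_n` (trivial inputs, outputs `Fin (dl i)`) and a leaf node `F` (input
`Fin dF`, trivial output); trivial variables are suppressed.  The local operations at a
root node `λ_i` are the probability distributions on its output variable, and the unique
local channel at `F` is the deterministic discarding. -/
def IsClassicalProcessExtN {n : ℕ} (In Out : Fin n → Type) (dl : Fin n → ℕ) (dF : ℕ)
    [∀ i, Fintype (In i)] [∀ i, Fintype (Out i)]
    (κe : NIdx In Out → ((i : Fin n) → Fin (dl i)) → Fin dF → ℝ) : Prop :=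
  (∀ p l fv, 0 ≤ κe p l fv ∧ κe p l fv ≤ 1) ∧
    ∀ (Q : (i : Fin n) → In i → Out i → ℝ) (Pl : (i : Fin n) → Fin (dl i) → ℝ),
      (∀ i, IsClassicalChannel (Q i)) →
      (∀ i l, 0 ≤ Pl i l) → (∀ i, ∑ l, Pl i l = 1) →
      ∑ p : NIdx In Out, ∑ l : (i : Fin n) → Fin (dl i), ∑ fv : Fin dF,
        κe p l fv * (∏ i, Q i (p i).1 (p i).2) * ∏ i, Pl i (l i) = 1

/-- `κ` is compatible with the directed graph `G` (where `G j i` denotes an arrow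
`X_j → X_i`, i.e. `X_j ∈ Pa(X_i)`): it extends to a reversible deterministic process with
an additional leaf node `F` and root nodes `λ_1, …, λ_n` (a valid classical process over
the `2n+1` nodes), recovering `κ` by marginalization over a product distribution on the
`λ_i`, such that through `f` each `X_i^in` depends neither on `λ_j^out` for `j ≠ i` nor on
`X_j^out` for `X_j ∉ Pa(X_i)`. -/
def CompatibleWithGraph {n : ℕ} (In Out : Fin n → Type)
    [∀ i, Fintype (In i)] [∀ i, Fintype (Out i)]
    [∀ i, DecidableEq (In i)] [∀ i, DecidableEq (Out i)]
    (G : Fin n → Fin n → Prop) (κ : NIdx In Out → ℝ) : Prop :=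
  ∃ (dl : Fin n → ℕ) (dF : ℕ)
    (f : (((i : Fin n) → Out i) × ((i : Fin n) → Fin (dl i))) →
         (((i : Fin n) → In i) × Fin dF)),
    Function.Bijective f ∧
    IsClassicalProcessExtN In Out dl dF
      (fun p l fv => if ((fun i => (p i).1, fv) = f ((fun i => (p i).2), l)) then 1 else 0) ∧
    -- X_i^in does not depend on λ_j^out for j ≠ i
    (∀ (i j : Fin n), j ≠ i → ∀ o l (y : Fin (dl j)),
      (f (o, Function.update l j y)).1 i = (f (o, l)).1 i) ∧
    -- X_i^in does not depend on X_j^out for X_j ∉ Pa(X_i)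
    (∀ (i j : Fin n), ¬ G j i → ∀ o l (y : Out j),
      (f (Function.update o j y, l)).1 i = (f (o, l)).1 i) ∧
    ∃ P : (i : Fin n) → Fin (dl i) → ℝ,
      (∀ i l, 0 ≤ P i l) ∧ (∀ i, ∑ l, P i l = 1) ∧
      ∀ p : NIdx In Out,
        κ p = ∑ l : (i : Fin n) → Fin (dl i), ∑ fv : Fin dF,
          (if ((fun i => (p i).1, fv) = f ((fun i => (p i).2), l)) then (1:ℝ) else 0) *
            ∏ i, P i (l i)

lemma local_dep_aux {n : ℕ} {δ : Fin n → Type*} {α : Type*}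
    (F : (∀ j, δ j) → α) (i : Fin n)
    (h : ∀ j, j ≠ i → ∀ l y, F (Function.update l j y) = F l)
    (l l' : ∀ j, δ j) (hi : l i = l' i) : F l = F l' := by
  classical
  have key : ∀ s : Finset (Fin n), i ∉ s →
      F (fun j => if j ∈ s then l' j else l j) = F l := by
    intro s
    induction s using Finset.induction with
    | empty => simp
    | @insert j s hj ih =>
      intro his
      have hji : j ≠ i := by rintro rfl; exact his (Finset.mem_insert_self _ _)
      have heq : (fun j' => if j' ∈ insert j s then l' j' else l j')
          = Function.update (fun j' => if j' ∈ s then l' j' else l j') j (l' j) := by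
        funext j'
        by_cases hj' : j' = j
        · subst hj'; simp [Function.update]
        · simp [Function.update, hj', Finset.mem_insert]
      rw [heq, h j hji]
      exact ih (fun h' => his (Finset.mem_insert_of_mem h'))
  have := key (Finset.univ.erase i) (by simp)
  have heq : (fun j => if j ∈ Finset.univ.erase i then l' j else l j) = l' := by
    funext j
    by_cases hj : j = i
    · subst hj; simp [hi]
    · simp [hj]
  rw [heq] at this
  exact this.symm


/-- **Compatibility implies Markovianity (classical)**: if a classical process `κ` over
split nodes `X_1, …, X_n` is compatible with a directed graph `G`, then `κ` is Markov for
`G`, i.e. `κ = ∏_i P(X_i^in | Pa(X_i)^out)` for classical channels each of which depends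
only on the output variables of the parents of `X_i` in `G`. -/
theorem classical_compatibility_implies_markov
    {n : ℕ} (In Out : Fin n → Type)
    [∀ i, Fintype (In i)] [∀ i, Fintype (Out i)]
    [∀ i, DecidableEq (In i)] [∀ i, DecidableEq (Out i)]
    (G : Fin n → Fin n → Prop) (κ : NIdx In Out → ℝ)
    (hκ : IsClassicalProcess In Out κ)
    (hcompat : CompatibleWithGraph In Out G κ) :
    ∃ P : (i : Fin n) → (((j : Fin n) → Out j) → In i → ℝ),
      (∀ i, IsClassicalChannel (P i)) ∧
      (∀ i j, ¬ G j i → ∀ o (y : Out j), P i (Function.update o j y) = P i o) ∧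
      (∀ p : NIdx In Out, κ p = ∏ i, P i (fun j => (p j).2) ((p i).1)) := by
  classical
  obtain ⟨dl, dF, f, hbij, -, hlam, hout, PL, hPpos, hPsum, hκeq⟩ := hcompat
  -- each Fin (dl i) is nonempty
  have hne : ∀ i, Nonempty (Fin (dl i)) := by
    intro i
    rcases Nat.eq_zero_or_pos (dl i) with h0 | hpos
    · exfalso
      haveI : IsEmpty (Fin (dl i)) := by rw [h0]; infer_instance
      have := hPsum i
      rw [Finset.univ_eq_empty] at this
      simp at this
    · exact ⟨⟨0, hpos⟩⟩
  let l0 : (i : Fin n) → Fin (dl i) := fun i => Classical.choice (hne i)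
  set g : (i : Fin n) → ((j : Fin n) → Out j) → Fin (dl i) → In i :=
    fun i o y => (f (o, Function.update l0 i y)).1 i with hg_def
  have hg : ∀ (i : Fin n) o l, (f (o, l)).1 i = g i o (l i) := by
    intro i o l
    exact local_dep_aux (fun l => (f (o, l)).1 i) i
      (fun j hj l y => hlam i j hj o l y) l (Function.update l0 i (l i)) (by simp)
  refine ⟨fun i o x => ∑ y, (if x = g i o y then 1 else 0) * PL i y, ?_, ?_, ?_⟩
  · intro i
    constructor
    · intro o x
      exact Finset.sum_nonneg fun y _ => mul_nonneg (by positivity) (hPpos i y)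
    · intro o
      rw [Finset.sum_comm]
      have : ∀ y : Fin (dl i),
          ∑ x : In i, (if x = g i o y then (1:ℝ) else 0) * PL i y = PL i y := by
        intro y
        rw [← Finset.sum_mul]
        simp
      simp only [this]
      exact hPsum i
  · intro i j hji o y
    funext x
    refine Finset.sum_congr rfl fun y' _ => ?_
    simp only [hg_def]
    rw [hout i j hji o (Function.update l0 i y') y]
  · intro p
    rw [hκeq p]
    have step1 : ∀ l : (i : Fin n) → Fin (dl i),
        (∑ fv : Fin dF,
          (if ((fun i => (p i).1, fv) = f ((fun i => (p i).2), l)) then (1:ℝ) else 0) *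
            ∏ i, PL i (l i))
        = (∏ i, (if (p i).1 = g i (fun j => (p j).2) (l i) then (1:ℝ) else 0))
            * ∏ i, PL i (l i) := by
      intro l
      rw [← Finset.sum_mul]
      congr 1
      have : ∀ fv : Fin dF,
          (if ((fun i => (p i).1, fv) = f ((fun i => (p i).2), l)) then (1:ℝ) else 0)
          = (if (fun i => (p i).1) = (f ((fun i => (p i).2), l)).1 then (1:ℝ) else 0)
            * (if fv = (f ((fun i => (p i).2), l)).2 then (1:ℝ) else 0) := by
        intro fv
        by_cases h1 : (fun i => (p i).1) = (f ((fun i => (p i).2), l)).1 <;>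
          by_cases h2 : fv = (f ((fun i => (p i).2), l)).2 <;>
          simp [Prod.ext_iff, h1, h2]
      simp only [this]
      rw [← Finset.mul_sum,
        Finset.sum_ite_eq' Finset.univ ((f ((fun i => (p i).2), l)).2) (fun _ => (1:ℝ))]
      simp only [Finset.mem_univ, if_true, mul_one]
      have : ((fun i => (p i).1) = (f ((fun i => (p i).2), l)).1)
          ↔ ∀ i, (p i).1 = g i (fun j => (p j).2) (l i) := by
        rw [funext_iff]
        constructor
        · intro h i; rw [h i, hg]
        · intro h i; rw [h i, ← hg]
      by_cases hc : (fun i => (p i).1) = (f ((fun i => (p i).2), l)).1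
      · rw [if_pos hc, Finset.prod_eq_one]
        intro i _
        rw [if_pos (this.mp hc i)]
      · rw [if_neg hc]
        rw [this] at hc
        push_neg at hc
        obtain ⟨i, hi⟩ := hc
        exact (Finset.prod_eq_zero (Finset.mem_univ i) (by rw [if_neg hi])).symm
    simp only [step1, ← Finset.prod_mul_distrib]
    exact (Fintype.prod_sum fun i y =>
      (if (p i).1 = g i (fun j => (p j).2) y then (1:ℝ) else 0) * PL i y).symm
end

section
/- Every deterministic classical process is Markov for its causal structure: for a deterministic process κ^f over split nodes X_1,…,X_n given by a function f: ∏_i X_i^out → ∏_i X_i^in, let G be the directed graph with an arrow X_i → X_j whenever the component X_j^in of f depends on the input X_i^out. Then κ^f = ∏_{i=1}^n P(X_i^in | Pa(X_i)^out), where Pa(X_i) is the parent set of X_i in G and each P(X_i^in | Pa(X_i)^out) is a classical channel (here the deterministic channel δ(X_i^in, f_i(Pa(X_i)^out))). -/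
open BigOperators

/-- The deterministic classical process associated to `f : ∏_i X_i^out → ∏_i X_i^in`. -/
def detProc {n : ℕ} {In Out : Fin n → Type} [∀ i, DecidableEq (In i)]
    (f : ((i : Fin n) → Out i) → ((i : Fin n) → In i)) : NIdx In Out → ℝ :=
  fun p => if (fun i => (p i).1) = f (fun i => (p i).2) then 1 else 0

/-- The component `X_j^in` of `f` depends on `X_i^out` (this is the arrow `X_i → X_j` of
the causal structure of the deterministic process `κ^f`). -/
def FDependsOn {n : ℕ} {In Out : Fin n → Type}
    (f : ((i : Fin n) → Out i) → ((i : Fin n) → In i)) (i j : Fin n) : Prop :=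
  ∃ (o : (i : Fin n) → Out i) (y : Out i), f (Function.update o i y) j ≠ f o j

/-!
The factor `δ(X_i^in, f_i(o))` is a deterministic channel, and `κ^f`, being the indicator of
`x = f(o)`, is the product of these factors. The only point is that `f_i` depends on its parents
alone: over finitely many nodes, two output assignments agreeing on `Pa(X_i)` are joined by
changing the remaining coordinates one at a time, and no such single change moves `f_i`.
-/

open Function

theorem dependsOn_of_forall_update_eq {ι β : Type*} {α : ι → Type*} [Finite ι] [DecidableEq ι]
    {g : ((i : ι) → α i) → β} {s : Set ι}
    (hg : ∀ i ∉ s, ∀ x (y : α i), g (update x i y) = g x) : DependsOn g s := by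
  classical
  have : Fintype ι := Fintype.ofFinite ι
  suffices key : ∀ t : Finset ι, ∀ x x' : (i : ι) → α i,
      (∀ i ∉ t, x i = x' i) → (∀ i ∈ t, i ∉ s) → g x = g x' by
    intro x x' hs
    refine key {i | x i ≠ x' i} x x' (by simp) fun i hi his => ?_
    exact (Finset.mem_filter.mp hi).2 (hs i his)
  intro t
  induction t using Finset.induction_on with
  | empty => exact fun x x' h _ => congrArg g (funext fun i => h i (Finset.notMem_empty i))
  | @insert a t _ ih =>
    intro x x' hx hts
    calc g x = g (update x a (x' a)) := (hg a (hts a (Finset.mem_insert_self a t)) x _).symm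
      _ = g x' := by
        refine ih _ _ (fun i hi => ?_) fun i hi => hts i (Finset.mem_insert_of_mem hi)
        rcases eq_or_ne i a with rfl | hia
        · exact update_self _ _ _
        · rw [update_of_ne hia]
          exact hx i (by simp [hi, hia])

theorem isClassicalChannel_ite_eq {X Y : Type} [Fintype Y] [DecidableEq Y] (g : X → Y) :
    IsClassicalChannel fun x y => if g x = y then (1 : ℝ) else 0 :=
  ⟨fun _ _ => by positivity, fun x => Fintype.sum_ite_eq (g x) fun _ => (1 : ℝ)⟩

section DeterministicProcess

variable {n : ℕ} {In Out : Fin n → Type}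

theorem dependsOn_setOf_fDependsOn (f : ((i : Fin n) → Out i) → ((i : Fin n) → In i))
    (i : Fin n) :
    DependsOn (fun o => f o i) {j | FDependsOn f j i} :=
  dependsOn_of_forall_update_eq fun _ hj o y => by_contra fun hne => hj ⟨o, y, hne⟩

theorem detProc_eq_prod [∀ i, DecidableEq (In i)]
    (f : ((i : Fin n) → Out i) → ((i : Fin n) → In i)) (p : NIdx In Out) :
    detProc f p = ∏ i, if f (fun j => (p j).2) i = (p i).1 then 1 else 0 := by
  simp only [detProc, Fintype.prod_boole, funext_iff, eq_comm]
  congr 1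

end DeterministicProcess

theorem deterministic_process_markov_for_causal_structure_general
    {n : ℕ} (In Out : Fin n → Type)
    [∀ i, Fintype (In i)]
    [∀ i, DecidableEq (In i)]
    (f : ((i : Fin n) → Out i) → ((i : Fin n) → In i)) :
    ∃ P : (i : Fin n) → ((j : Fin n) → Out j) → In i → ℝ,
      (∀ i, IsClassicalChannel (P i)) ∧
      (∀ i, ∀ o o' : (j : Fin n) → Out j,
        (∀ j, FDependsOn f j i → o j = o' j) → P i o = P i o') ∧
      (∀ i o xi, P i o xi = if f o i = xi then 1 else 0) ∧
      (∀ p : NIdx In Out, detProc f p = ∏ i, P i (fun j => (p j).2) ((p i).1)) :=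
  ⟨fun i o xi => if f o i = xi then 1 else 0,
    fun i => isClassicalChannel_ite_eq fun o => f o i,
    fun i _ _ h => by simp only [dependsOn_setOf_fDependsOn f i h],
    fun _ _ _ => rfl,
    detProc_eq_prod f⟩

/-- **Every deterministic classical process is Markov for its causal structure**:
`κ^f` factorizes as `∏_i P(X_i^in | Pa(X_i)^out)`, where `Pa(X_i)` is the set of nodes
`X_j` such that `X_i^in` depends on `X_j^out` through `f`, and each factor is the
deterministic channel `δ(X_i^in, f_i(Pa(X_i)^out))`, a classical channel depending only
on the parents' output variables. -/
theorem deterministic_process_markov_for_causal_structure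
    {n : ℕ} (In Out : Fin n → Type)
    [∀ i, Fintype (In i)] [∀ i, Fintype (Out i)]
    [∀ i, DecidableEq (In i)] [∀ i, DecidableEq (Out i)]
    (f : ((i : Fin n) → Out i) → ((i : Fin n) → In i))
    (hproc : IsClassicalProcess In Out (detProc f)) :
    ∃ P : (i : Fin n) → ((j : Fin n) → Out j) → In i → ℝ,
      (∀ i, IsClassicalChannel (P i)) ∧
      (∀ i, ∀ o o' : (j : Fin n) → Out j,
        (∀ j, FDependsOn f j i → o j = o' j) → P i o = P i o') ∧
      (∀ i o xi, P i o xi = if f o i = xi then 1 else 0) ∧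
      (∀ p : NIdx In Out, detProc f p = ∏ i, P i (fun j => (p j).2) ((p i).1)) :=
  deterministic_process_markov_for_causal_structure_general In Out f
end

section
/- Given classical split nodes X_1,…,X_n, the set of reversibly extendible classical processes over X_1,…,X_n coincides with the deterministic polytope: a classical process κ over X_1,…,X_n is reversibly extendible if and only if κ is a convex combination Σ_{i=1}^m q_i κ^{f_i} of deterministic processes κ^{f_i} (q_i ≥ 0, Σ_i q_i = 1). -/
open BigOperators

/-- `κe` is a classical process over the `n+2` split nodes `X_1, …, X_n`, a root node `λ`
(trivial input variable, output variable `Λ`) and a leaf node `F` (input variable `Φ`,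
trivial output variable); trivial variables are suppressed. -/
def IsClassicalProcessExt {n : ℕ} (In Out : Fin n → Type) (Λ Φ : Type)
    [∀ i, Fintype (In i)] [∀ i, Fintype (Out i)] [Fintype Λ] [Fintype Φ]
    (κe : NIdx In Out → Λ → Φ → ℝ) : Prop :=
  (∀ p l fv, 0 ≤ κe p l fv ∧ κe p l fv ≤ 1) ∧
    ∀ (Q : (i : Fin n) → In i → Out i → ℝ) (Pl : Λ → ℝ),
      (∀ i, IsClassicalChannel (Q i)) → (∀ l, 0 ≤ Pl l) → (∑ l, Pl l) = 1 →
      ∑ p : NIdx In Out, ∑ l : Λ, ∑ fv : Φ,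
        κe p l fv * (∏ i, Q i (p i).1 (p i).2) * Pl l = 1

/-- `κ` is reversibly extendible: there is a reversible (bijective) deterministic process
over the nodes `X_1, …, X_n` together with an additional leaf node `F` and root node `λ`,
which is a valid classical process over the `n+2` nodes, and a distribution `P(λ^out)`,
such that `κ` is recovered by marginalizing over `F^in` and `λ^out`. -/
def ReversiblyExtendible {n : ℕ} (In Out : Fin n → Type)
    [∀ i, Fintype (In i)] [∀ i, Fintype (Out i)]
    [∀ i, DecidableEq (In i)] [∀ i, DecidableEq (Out i)]
    (κ : NIdx In Out → ℝ) : Prop :=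
  ∃ (dl dF : ℕ) (f : (((i : Fin n) → Out i) × Fin dl) → (((i : Fin n) → In i) × Fin dF)),
    Function.Bijective f ∧
    IsClassicalProcessExt In Out (Fin dl) (Fin dF)
      (fun p l fv => if ((fun i => (p i).1, fv) = f ((fun i => (p i).2), l)) then 1 else 0) ∧
    ∃ P : Fin dl → ℝ, (∀ l, 0 ≤ P l) ∧ (∑ l, P l) = 1 ∧
      ∀ p : NIdx In Out,
        κ p = ∑ l : Fin dl, ∑ fv : Fin dF,
          (if ((fun i => (p i).1, fv) = f ((fun i => (p i).2), l)) then (1:ℝ) else 0) * P l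

/-- `κ` lies in the deterministic polytope: it is a convex mixture of deterministic
classical processes. -/
def InDeterministicPolytope {n : ℕ} (In Out : Fin n → Type)
    [∀ i, Fintype (In i)] [∀ i, Fintype (Out i)]
    [∀ i, DecidableEq (In i)] [∀ i, DecidableEq (Out i)]
    (κ : NIdx In Out → ℝ) : Prop :=
  ∃ (m : ℕ) (g : Fin m → (((i : Fin n) → Out i) → ((i : Fin n) → In i))) (q : Fin m → ℝ),
    (∀ i, 0 ≤ q i) ∧ (∑ i, q i) = 1 ∧
    (∀ i, IsClassicalProcess In Out (detProc (g i))) ∧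
    ∀ p, κ p = ∑ i, q i * detProc (g i) p


section helpers
variable {n : ℕ} {In Out : Fin n → Type}
  [∀ i, Fintype (In i)] [∀ i, Fintype (Out i)]
  [∀ i, DecidableEq (In i)] [∀ i, DecidableEq (Out i)]

def nidxEquiv : NIdx In Out ≃ ((i : Fin n) → In i) × ((i : Fin n) → Out i) where
  toFun p := (fun i => (p i).1, fun i => (p i).2)
  invFun q i := (q.1 i, q.2 i)
  left_inv p := rfl
  right_inv q := rfl

lemma sum_nidx (T : NIdx In Out → ℝ) :
    ∑ p : NIdx In Out, T p =
      ∑ a : (i : Fin n) → In i, ∑ b : (i : Fin n) → Out i, T (fun i => (a i, b i)) := by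
  rw [← Equiv.sum_comp (nidxEquiv (In:=In) (Out:=Out)).symm T, Fintype.sum_prod_type]
  rfl

lemma sum_det (h : ((i : Fin n) → Out i) → ((i : Fin n) → In i)) (T : NIdx In Out → ℝ) :
    ∑ p : NIdx In Out,
      (if (fun i => (p i).1) = h (fun i => (p i).2) then (1:ℝ) else 0) * T p
      = ∑ b : (i : Fin n) → Out i, T (fun i => (h b i, b i)) := by
  rw [sum_nidx (T := fun p => (if (fun i => (p i).1) = h (fun i => (p i).2) then (1:ℝ) else 0) * T p)]
  rw [Finset.sum_comm]
  refine Finset.sum_congr rfl fun b _ => ?_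
  have : ∀ a : (i : Fin n) → In i,
      ((if (fun i => ((fun i => (a i, b i)) i).1) = h (fun i => ((fun i => (a i, b i)) i).2) then (1:ℝ) else 0))
      = if a = h b then 1 else 0 := by
    intro a; rfl
  simp only [this, ite_mul, one_mul, zero_mul]
  rw [Finset.sum_ite_eq' Finset.univ (h b) (fun a => T (fun i => (a i, b i)))]
  simp

lemma sum_pair_fst {α β : Type} [DecidableEq α] [DecidableEq β] [Fintype β]
    (x : α) (c : α × β) :
    ∑ fv : β, (if (x, fv) = c then (1:ℝ) else 0) = if x = c.1 then 1 else 0 := by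
  obtain ⟨a, b⟩ := c
  simp only [Prod.mk.injEq, ite_and]
  split
  · simp [Finset.sum_ite_eq' Finset.univ b (fun _ => (1:ℝ))]
  · simp
end helpers

section fwd
variable {n : ℕ} {In Out : Fin n → Type}
  [∀ i, Fintype (In i)] [∀ i, Fintype (Out i)]
  [∀ i, DecidableEq (In i)] [∀ i, DecidableEq (Out i)]

lemma fwd_dir (κ : NIdx In Out → ℝ)
    (h : ReversiblyExtendible In Out κ) : InDeterministicPolytope In Out κ := by
  obtain ⟨dl, dF, f, hbij, hext, P, hP0, hP1, hκeq⟩ := h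
  refine ⟨dl, fun l o => (f (o, l)).1, P, hP0, hP1, ?_, ?_⟩
  · intro l
    constructor
    · intro p
      unfold detProc
      split <;> norm_num
    · intro Q hQ
      have h1 := hext.2 Q (fun l' => if l' = l then 1 else 0) hQ
        (fun l' => by by_cases h : l' = l <;> simp [h])
        (by rw [Finset.sum_ite_eq' Finset.univ l (fun _ => (1:ℝ))]; simp)
      rw [← h1]
      refine Finset.sum_congr rfl fun p _ => ?_
      have e1 : ∀ l' : Fin dl,
          ∑ fv : Fin dF,
            (if ((fun i => (p i).1, fv) = f ((fun i => (p i).2), l')) then (1:ℝ) else 0)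
              * (∏ i, Q i (p i).1 (p i).2) * (if l' = l then (1:ℝ) else 0)
          = ((∑ fv : Fin dF,
              (if ((fun i => (p i).1, fv) = f ((fun i => (p i).2), l')) then (1:ℝ) else 0))
              * (∏ i, Q i (p i).1 (p i).2)) * (if l' = l then (1:ℝ) else 0) := by
        intro l'
        rw [Finset.sum_mul, Finset.sum_mul]
      rw [Finset.sum_congr rfl fun l' _ => e1 l']
      simp only [mul_ite, mul_one, mul_zero]
      rw [Finset.sum_ite_eq' Finset.univ l]
      simp only [Finset.mem_univ, if_true]
      rw [sum_pair_fst]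
      rfl
  · intro p
    rw [hκeq p]
    refine Finset.sum_congr rfl fun l _ => ?_
    rw [← Finset.sum_mul, sum_pair_fst]
    rw [mul_comm]
    rfl
end fwd

section bwd
variable {n : ℕ} {In Out : Fin n → Type}
  [∀ i, Fintype (In i)] [∀ i, Fintype (Out i)]
  [∀ i, DecidableEq (In i)] [∀ i, DecidableEq (Out i)]

/-- Generic equivalence `Fin (m * |α|) ≃ Fin m × α`. -/
noncomputable def finMulEquiv (m : ℕ) (α : Type) [Fintype α] :
    Fin (m * Fintype.card α) ≃ Fin m × α :=
  finProdFinEquiv.symm.trans (Equiv.prodCongr (Equiv.refl _) (Fintype.equivFin α).symm)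

variable [∀ i, Nonempty (In i)]

instance (i : Fin n) : NeZero (Fintype.card (In i)) := ⟨Fintype.card_ne_zero⟩

/-- Componentwise addition on the joint input space, transported from `Fin`. -/
noncomputable def addI (a b : (i : Fin n) → In i) : (i : Fin n) → In i :=
  fun i => (Fintype.equivFin (In i)).symm
    ((Fintype.equivFin (In i)) (a i) + (Fintype.equivFin (In i)) (b i))

noncomputable def subI (a b : (i : Fin n) → In i) : (i : Fin n) → In i :=
  fun i => (Fintype.equivFin (In i)).symm
    ((Fintype.equivFin (In i)) (a i) - (Fintype.equivFin (In i)) (b i))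

noncomputable def zeroI : (i : Fin n) → In i :=
  fun i => (Fintype.equivFin (In i)).symm 0

lemma subI_addI (a b : (i : Fin n) → In i) : subI (addI a b) b = a := by
  funext i; simp [addI, subI]

lemma addI_subI (a b : (i : Fin n) → In i) : addI (subI a b) b = a := by
  funext i; simp [addI, subI]

lemma addI_zeroI (b : (i : Fin n) → In i) : addI zeroI b = b := by
  funext i; simp [addI, zeroI]

/-- The reversible extension: `f(out, (i,a)) = (g_i(out) + a, (i, out))`. -/
noncomputable def coreEquiv
    (m : ℕ) (g : Fin m → (((i : Fin n) → Out i) → ((i : Fin n) → In i))) :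
    (((i : Fin n) → Out i) × Fin (m * Fintype.card ((i : Fin n) → In i))) ≃
      (((i : Fin n) → In i) × Fin (m * Fintype.card ((i : Fin n) → Out i))) where
  toFun x := (addI ((finMulEquiv m _ x.2).2) (g (finMulEquiv m _ x.2).1 x.1),
    (finMulEquiv m _).symm ((finMulEquiv m _ x.2).1, x.1))
  invFun y := ((finMulEquiv m _ y.2).2,
    (finMulEquiv m _).symm ((finMulEquiv m _ y.2).1,
      subI y.1 (g (finMulEquiv m _ y.2).1 (finMulEquiv m _ y.2).2)))
  left_inv x := by
    simp [subI_addI]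
  right_inv y := by
    simp [addI_subI]

lemma section_norm (g0 : ((i : Fin n) → Out i) → ((i : Fin n) → In i))
    (a : (i : Fin n) → In i)
    (hdet : IsClassicalProcess In Out (detProc g0))
    (Q : (i : Fin n) → In i → Out i → ℝ) (hQ : ∀ i, IsClassicalChannel (Q i)) :
    ∑ p : NIdx In Out,
      (if (fun i => (p i).1) = addI a (g0 (fun i => (p i).2)) then (1:ℝ) else 0)
        * ∏ i, Q i (p i).1 (p i).2 = 1 := by
  set Q' : (i : Fin n) → In i → Out i → ℝ := fun i x y =>
    Q i ((Fintype.equivFin (In i)).symm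
      ((Fintype.equivFin (In i)) (a i) + (Fintype.equivFin (In i)) x)) y with hQ'def
  have hQ' : ∀ i, IsClassicalChannel (Q' i) :=
    fun i => ⟨fun x y => (hQ i).1 _ _, fun x => (hQ i).2 _⟩
  calc ∑ p : NIdx In Out,
      (if (fun i => (p i).1) = addI a (g0 (fun i => (p i).2)) then (1:ℝ) else 0)
        * ∏ i, Q i (p i).1 (p i).2
      = ∑ b : (i : Fin n) → Out i, ∏ i, Q i (addI a (g0 b) i) (b i) :=
        sum_det (fun b => addI a (g0 b)) (fun p => ∏ i, Q i (p i).1 (p i).2)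
    _ = ∑ b : (i : Fin n) → Out i, ∏ i, Q' i (g0 b i) (b i) := rfl
    _ = ∑ p : NIdx In Out,
        (if (fun i => (p i).1) = g0 (fun i => (p i).2) then (1:ℝ) else 0)
          * ∏ i, Q' i (p i).1 (p i).2 :=
        (sum_det g0 (fun p => ∏ i, Q' i (p i).1 (p i).2)).symm
    _ = 1 := hdet.2 Q' hQ'

lemma bwd_good (κ : NIdx In Out → ℝ)
    (hpoly : InDeterministicPolytope In Out κ) :
    ReversiblyExtendible In Out κ := by
  classical
  obtain ⟨m, g, q, hq0, hq1, hdet, hmix⟩ := hpoly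
  set eL := finMulEquiv m ((i : Fin n) → In i) with heL
  refine ⟨m * Fintype.card ((i : Fin n) → In i), m * Fintype.card ((i : Fin n) → Out i),
    coreEquiv m g, (coreEquiv m g).bijective, ?_, ?_⟩
  · constructor
    · intro p l fv
      dsimp only
      constructor
      · split <;> norm_num
      · split <;> norm_num
    · intro Q Pl hQ hPl0 hPl1
      have e1 : ∀ (p : NIdx In Out) (l),
          ∑ fv, (if ((fun i => (p i).1, fv) = coreEquiv m g ((fun i => (p i).2), l))
              then (1:ℝ) else 0) * (∏ i, Q i (p i).1 (p i).2) * Pl l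
          = (if (fun i => (p i).1) = (coreEquiv m g ((fun i => (p i).2), l)).1
              then (1:ℝ) else 0) * (∏ i, Q i (p i).1 (p i).2) * Pl l := by
        intro p l
        rw [← Finset.sum_mul, ← Finset.sum_mul, sum_pair_fst]
      rw [Finset.sum_congr rfl fun p _ => Finset.sum_congr rfl fun l _ => e1 p l]
      rw [Finset.sum_comm]
      have e3 : ∀ l, (∑ p : NIdx In Out,
          (if (fun i => (p i).1) = (coreEquiv m g ((fun i => (p i).2), l)).1
            then (1:ℝ) else 0) * (∏ i, Q i (p i).1 (p i).2) * Pl l) = Pl l := by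
        intro l
        rw [← Finset.sum_mul]
        rw [show (∑ p : NIdx In Out,
          (if (fun i => (p i).1) = (coreEquiv m g ((fun i => (p i).2), l)).1
            then (1:ℝ) else 0) * (∏ i, Q i (p i).1 (p i).2)) = 1 from
          section_norm (g (eL l).1) ((eL l).2) (hdet _) Q hQ]
        rw [one_mul]
      rw [Finset.sum_congr rfl fun l _ => e3 l, hPl1]
  · refine ⟨fun l => if (eL l).2 = zeroI then q (eL l).1 else 0, ?_, ?_, ?_⟩
    · intro l; dsimp only; split
      · exact hq0 _
      · exact le_refl 0
    · rw [Fintype.sum_equiv eL _ (fun x => if x.2 = zeroI then q x.1 else 0) (fun l => rfl)]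
      rw [Fintype.sum_prod_type]
      rw [Finset.sum_congr rfl fun i _ =>
        Finset.sum_ite_eq' Finset.univ zeroI (fun _ => q i)]
      simpa using hq1
    · intro p
      rw [hmix p]
      have e1 : ∀ l, (∑ fv, (if ((fun i => (p i).1, fv) = coreEquiv m g ((fun i => (p i).2), l))
              then (1:ℝ) else 0) * (if (eL l).2 = zeroI then q (eL l).1 else 0))
          = (if (fun i => (p i).1) = (coreEquiv m g ((fun i => (p i).2), l)).1
              then (1:ℝ) else 0) * (if (eL l).2 = zeroI then q (eL l).1 else 0) := by
        intro l
        rw [← Finset.sum_mul, sum_pair_fst]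
      rw [Finset.sum_congr rfl fun l _ => e1 l]
      rw [Fintype.sum_equiv eL
        (fun l => (if (fun i => (p i).1) = (coreEquiv m g ((fun i => (p i).2), l)).1
            then (1:ℝ) else 0) * (if (eL l).2 = zeroI then q (eL l).1 else 0))
        (fun x => (if (fun i => (p i).1) = addI x.2 (g x.1 (fun i => (p i).2))
            then (1:ℝ) else 0) * (if x.2 = zeroI then q x.1 else 0)) (fun l => rfl)]
      rw [Fintype.sum_prod_type]
      refine Finset.sum_congr rfl fun i _ => ?_
      rw [Finset.sum_congr rfl fun a _ => (mul_ite _ _ _ _)]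
      simp only [mul_zero]
      rw [Finset.sum_ite_eq' Finset.univ zeroI
        (fun a => (if (fun i => (p i).1) = addI a (g i (fun i => (p i).2))
            then (1:ℝ) else 0) * q i)]
      simp only [Finset.mem_univ, if_true, addI_zeroI]
      rw [mul_comm]
      rfl
end bwd

section final
variable {n : ℕ} {In Out : Fin n → Type}
  [∀ i, Fintype (In i)] [∀ i, Fintype (Out i)]
  [∀ i, DecidableEq (In i)] [∀ i, DecidableEq (Out i)]

lemma bwd_bad (j : Fin n) (hj1 : Nonempty (In j)) (hj2 : IsEmpty (Out j))
    (κ : NIdx In Out → ℝ) : ReversiblyExtendible In Out κ := by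
  haveI hO : IsEmpty ((i : Fin n) → Out i) := ⟨fun o => hj2.false (o j)⟩
  haveI hN : IsEmpty (NIdx In Out) := ⟨fun p => hj2.false (p j).2⟩
  have noQ : ∀ Q : (i : Fin n) → In i → Out i → ℝ,
      (∀ i, IsClassicalChannel (Q i)) → False := by
    intro Q hQ
    obtain ⟨x⟩ := hj1
    have := (hQ j).2 x
    simp [Finset.univ_eq_empty] at this
  refine ⟨1, 0, fun x => isEmptyElim x.1, ⟨fun a => isEmptyElim a.1, fun y => isEmptyElim y.2⟩,
    ⟨fun p _ _ => isEmptyElim p, fun Q Pl hQ _ _ => (noQ Q hQ).elim⟩,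
    fun _ => 1, fun _ => zero_le_one, by simp, fun p => isEmptyElim p⟩

lemma fwd_bad (j : Fin n) (hj1 : Nonempty (In j)) (hj2 : IsEmpty (Out j))
    (κ : NIdx In Out → ℝ) : InDeterministicPolytope In Out κ := by
  haveI hO : IsEmpty ((i : Fin n) → Out i) := ⟨fun o => hj2.false (o j)⟩
  haveI hN : IsEmpty (NIdx In Out) := ⟨fun p => hj2.false (p j).2⟩
  have noQ : ∀ Q : (i : Fin n) → In i → Out i → ℝ,
      (∀ i, IsClassicalChannel (Q i)) → False := by
    intro Q hQ
    obtain ⟨x⟩ := hj1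
    have := (hQ j).2 x
    simp [Finset.univ_eq_empty] at this
  exact ⟨1, fun _ o => isEmptyElim o, fun _ => 1, fun _ => zero_le_one, by simp,
    fun i => ⟨fun p => isEmptyElim p, fun Q hQ => (noQ Q hQ).elim⟩,
    fun p => isEmptyElim p⟩
end final

/-- **The reversibly extendible classical processes are exactly the deterministic
polytope**: a classical process `κ` over the split nodes `X_1, …, X_n` is reversibly
extendible if and only if it is a convex mixture of deterministic processes. -/
theorem reversibly_extendible_iff_deterministic_polytope
    {n : ℕ} (In Out : Fin n → Type)
    [∀ i, Fintype (In i)] [∀ i, Fintype (Out i)]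
    [∀ i, DecidableEq (In i)] [∀ i, DecidableEq (Out i)]
    (κ : NIdx In Out → ℝ) (hκ : IsClassicalProcess In Out κ) :
    ReversiblyExtendible In Out κ ↔ InDeterministicPolytope In Out κ := by
  constructor
  · exact fwd_dir κ
  · intro hpoly
    by_cases hbad : ∃ j, Nonempty (In j) ∧ IsEmpty (Out j)
    · obtain ⟨j, hj1, hj2⟩ := hbad
      exact bwd_bad j hj1 hj2 κ
    · -- all `In i` are nonempty
      have hne : ∀ j, Nonempty (In j) → Nonempty (Out j) := by
        intro j hj
        by_contra h
        exact hbad ⟨j, hj, not_nonempty_iff.mp h⟩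
      have hQ0 : ∀ i, IsClassicalChannel (fun (_ : In i) (_ : Out i) =>
          ((Fintype.card (Out i) : ℝ))⁻¹) := by
        intro i
        refine ⟨fun x y => by positivity, fun x => ?_⟩
        haveI : Nonempty (Out i) := hne i ⟨x⟩
        rw [Finset.sum_const, nsmul_eq_mul, Finset.card_univ]
        exact mul_inv_cancel₀ (by exact_mod_cast Fintype.card_ne_zero)
      have h1 := hκ.2 _ hQ0
      have hNE : Nonempty (NIdx In Out) := by
        by_contra h
        haveI : IsEmpty (NIdx In Out) := not_nonempty_iff.mp h
        rw [Finset.univ_eq_empty, Finset.sum_empty] at h1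
        exact one_ne_zero h1.symm
      obtain ⟨p0⟩ := hNE
      haveI : ∀ i, Nonempty (In i) := fun i => ⟨(p0 i).1⟩
      exact bwd_good κ hpoly
end

section
/- Let κ^{f_1},…,κ^{f_m} be deterministic classical processes over split nodes X_1,…,X_n, given by functions f_i: ∏_j X_j^out → ∏_j X_j^in, and let (q_1,…,q_m) be a probability distribution. Let λ^out and F^in be variables of cardinality m, and define f: (∏_j X_j^out) × λ^out → (∏_j X_j^in) × F^in by f(x, i) = (f_i(x), i). Then κ^f together with this definition is a deterministic classical process over the n+2 nodes X_1,…,X_n, λ (root node with trivial input) and F (leaf node with trivial output), and marginalizing κ^f over F^in and λ^out with P(λ^out = i) = q_i yields Σ_{i=1}^m q_i κ^{f_i}. -/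
open BigOperators

/-- **Mixtures of deterministic processes arise from a single deterministic process on
`n+2` nodes**: given deterministic classical processes `κ^{g_1}, …, κ^{g_m}` over
`X_1, …, X_n` and a probability distribution `(q_1, …, q_m)`, the function
`f(x, i) = (g_i(x), i)` (with `λ^out` and `F^in` of cardinality `m`) defines a
deterministic classical process over the `n+2` nodes `X_1, …, X_n, λ, F`, and
marginalizing it over `F^in` and `λ^out` with `P(λ^out = i) = q_i` yields
`∑_i q_i κ^{g_i}`. -/
theorem mixture_from_deterministic_extension
    {n m : ℕ} (In Out : Fin n → Type)
    [∀ i, Fintype (In i)] [∀ i, Fintype (Out i)]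
    [∀ i, DecidableEq (In i)] [∀ i, DecidableEq (Out i)]
    (g : Fin m → (((i : Fin n) → Out i) → ((i : Fin n) → In i)))
    (hg : ∀ i, IsClassicalProcess In Out (detProc (g i)))
    (q : Fin m → ℝ) (hq0 : ∀ i, 0 ≤ q i) (hq1 : ∑ i, q i = 1) :
    IsClassicalProcessExt In Out (Fin m) (Fin m)
      (fun p l fv => if ((fun i => (p i).1, fv) = (g l (fun i => (p i).2), l)) then 1 else 0) ∧
    ∀ p : NIdx In Out,
      ∑ l : Fin m, ∑ fv : Fin m,
          (if ((fun i => (p i).1, fv) = (g l (fun i => (p i).2), l)) then (1:ℝ) else 0) * q l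
        = ∑ i : Fin m, q i * detProc (g i) p := by

  have key : ∀ (p : NIdx In Out) (l : Fin m),
      ∑ fv : Fin m, (if ((fun i => (p i).1, fv) = (g l (fun i => (p i).2), l)) then (1:ℝ) else 0)
        = detProc (g l) p := by
    intro p l
    simp only [Prod.mk.injEq, detProc]
    by_cases h : (fun i => (p i).1) = g l fun i => (p i).2 <;> simp [h]
  constructor
  · constructor
    · intro p l fv
      dsimp only
      constructor <;> split <;> norm_num
    · intro Q Pl hQ hPl0 hPl1
      have : ∀ p : NIdx In Out, ∀ l : Fin m,
          (∑ fv : Fin m, (if ((fun i => (p i).1, fv) = (g l (fun i => (p i).2), l)) then (1:ℝ) else 0)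
            * (∏ i, Q i (p i).1 (p i).2) * Pl l)
          = detProc (g l) p * (∏ i, Q i (p i).1 (p i).2) * Pl l := by
        intro p l
        rw [← Finset.sum_mul, ← Finset.sum_mul, key]
      simp only [this]
      rw [Finset.sum_comm]
      have : ∀ l : Fin m,
          (∑ p : NIdx In Out, detProc (g l) p * (∏ i, Q i (p i).1 (p i).2) * Pl l)
          = Pl l := by
        intro l
        rw [← Finset.sum_mul, (hg l).2 Q hQ, one_mul]
      simp only [this]
      exact hPl1
  · intro p
    have : ∀ l : Fin m,
        (∑ fv : Fin m,
          (if ((fun i => (p i).1, fv) = (g l (fun i => (p i).2), l)) then (1:ℝ) else 0) * q l)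
        = q l * detProc (g l) p := by
      intro l
      rw [← Finset.sum_mul, key, mul_comm]
    simp only [this]
end

section
/- The Araújo–Feix function defines a valid deterministic classical process: let f: {0,1}^3 → {0,1}^3 be f(a,b,c) = (¬b ∧ c, ¬c ∧ a, ¬a ∧ b). Then κ^f = δ((A^in, B^in, C^in), f(A^out, B^out, C^out)) is a classical process over three split nodes A, B, C with binary variables; equivalently, for every triple of functions g_A, g_B, g_C: {0,1} → {0,1} there exists exactly one triple (a,b,c) ∈ {0,1}^3 satisfying a = g_A(¬b ∧ c), b = g_B(¬c ∧ a), and c = g_C(¬a ∧ b). -/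
open BigOperators

def fAF : Bool × Bool × Bool → Bool × Bool × Bool :=
  fun x => (!x.2.1 && x.2.2, !x.2.2 && x.1, !x.1 && x.2.1)

/-- **The Araújo–Feix function defines a valid deterministic classical process**:
`κ^f = δ((A^in,B^in,C^in), f(A^out,B^out,C^out))` is a classical process over the three
binary split nodes `A`, `B`, `C`; equivalently, for every triple of functions
`g_A, g_B, g_C : {0,1} → {0,1}` there exists exactly one triple `(a,b,c)` with
`a = g_A(¬b ∧ c)`, `b = g_B(¬c ∧ a)` and `c = g_C(¬a ∧ b)`. -/
theorem AF_is_a_valid_deterministic_process :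
    IsClassicalProcess3Bool
      (fun ai ao bi bo ci co => if (ai, bi, ci) = fAF (ao, bo, co) then 1 else 0) ∧
    ∀ gA gB gC : Bool → Bool,
      ∃! x : Bool × Bool × Bool,
        x.1 = gA (!x.2.1 && x.2.2) ∧ x.2.1 = gB (!x.2.2 && x.1) ∧ x.2.2 = gC (!x.1 && x.2.1) := by
  constructor
  · constructor
    · intro ai ao bi bo ci co
      dsimp only
      split <;> norm_num
    · rintro QA QB QC ⟨_, hA⟩ ⟨_, hB⟩ ⟨_, hC⟩
      have hA0 := hA false; have hA1 := hA true
      have hB0 := hB false; have hB1 := hB true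
      have hC0 := hC false; have hC1 := hC true
      simp only [Fintype.sum_bool] at hA0 hA1 hB0 hB1 hC0 hC1
      have eA0 : QA false false = 1 - QA false true := by linarith
      have eA1 : QA true false = 1 - QA true true := by linarith
      have eB0 : QB false false = 1 - QB false true := by linarith
      have eB1 : QB true false = 1 - QB true true := by linarith
      have eC0 : QC false false = 1 - QC false true := by linarith
      have eC1 : QC true false = 1 - QC true true := by linarith
      simp only [Fintype.sum_bool, fAF]
      norm_num
      rw [eA0, eA1, eB0, eB1, eC0, eC1]
      ring
  · simp only [ExistsUnique]
    decide
end
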